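/- arXiv:1205.5119 — 9 statements merged into one kernel-verified Lean document; each statement's English description precedes it below -/
import Mathlib

section
/- Let A be a finite-dimensional symmetric algebra over a field K (i.e. there is a symmetric K-linear form f: A → K whose kernel contains no nonzero left or right ideal of A). If ρ ∈ A is a nonzero element, then there exists ρ₁ ∈ A such that both ρ·ρ₁ ≠ 0 and ρ₁·ρ ≠ 0. -/
theorem stmt0_general (K A : Type*) [Field K] [Ring A] [Algebra K A]
    (f : A →ₗ[K] K)
    (hsym : ∀ a b : A, f (a * b) = f (b * a))
    (hR : ∀ x : A, (∀ a : A, f (x * a) = 0) → x = 0)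
    (ρ : A) (hρ : ρ ≠ 0) :
    ∃ ρ₁ : A, ρ * ρ₁ ≠ 0 ∧ ρ₁ * ρ ≠ 0 := by
  obtain ⟨a, ha⟩ : ∃ a, f (ρ * a) ≠ 0 := by
    by_contra! h
    exact hρ (hR ρ h)
  exact ⟨a, fun h => ha (by rw [h, map_zero]), fun h => ha (by rw [hsym, h, map_zero])⟩

/-- If `A` is a finite-dimensional symmetric `K`-algebra (there is a symmetric linear form
`f : A → K` whose kernel contains no nonzero left or right ideal), then for every nonzero
`ρ ∈ A` there is `ρ₁` with `ρ * ρ₁ ≠ 0` and `ρ₁ * ρ ≠ 0`. -/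
theorem stmt0 (K A : Type*) [Field K] [Ring A] [Algebra K A] [FiniteDimensional K A]
    (f : A →ₗ[K] K)
    (hsym : ∀ a b : A, f (a * b) = f (b * a))
    (hL : ∀ x : A, (∀ a : A, f (a * x) = 0) → x = 0)
    (hR : ∀ x : A, (∀ a : A, f (x * a) = 0) → x = 0)
    (ρ : A) (hρ : ρ ≠ 0) :
    ∃ ρ₁ : A, ρ * ρ₁ ≠ 0 ∧ ρ₁ * ρ ≠ 0 :=
  stmt0_general K A f hsym hR ρ hρ
end

section
/- Let K be a field and s, t ≥ 2 integers. In the K-algebra Λ = K[X,Y]/(XY, X^s − Y^t), the Jacobson radical is generated by the images of X and Y, and the socle of Λ (the annihilator of the Jacobson radical) is one-dimensional, spanned by the image of X^s. -/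
open MvPolynomial

noncomputable abbrev lamIdeal (K : Type*) [Field K] (s t : ℕ) : Ideal (MvPolynomial (Fin 2) K) :=
  Ideal.span {X 0 * X 1, X (0 : Fin 2) ^ s - X 1 ^ t}

abbrev lam (K : Type*) [Field K] (s t : ℕ) : Type _ :=
  MvPolynomial (Fin 2) K ⧸ lamIdeal K s t

/-!
An element of `(XY, X^s - Y^t)` is detected by its coefficients on the two axes: those of `X^i`
(`i < s`) and `Y^j` (`j < t`) vanish and those of `X^s` and `Y^t` cancel; conversely, vanishing
of the axis coefficients up to `X^s`, `Y^t` puts a polynomial in the monomial ideal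
`(XY, X^(s+1), Y^(t+1))`, which lies in the ideal. Hence `X^s ≠ 0` in `Λ`, and a polynomial `p`
with `pX`, `pY` in the ideal has no axis coefficients below `X^s`, `Y^t`, so `p ≡ aX^s + bY^t
≡ (a + b)X^s`. The images of `X` and `Y` are nilpotent and generate the kernel of the
augmentation `Λ → K`, a maximal ideal, so they generate the Jacobson radical.
-/

namespace MvPolynomial

variable {σ R : Type*} [CommSemiring R]

theorem coeff_mul_X_pow_of_lt {m : σ →₀ ℕ} {i : σ} {n : ℕ} (h : m i < n)
    (p : MvPolynomial σ R) :
    coeff m (p * X i ^ n) = 0 := by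
  rw [X_pow_eq_monomial, coeff_mul_monomial', if_neg]
  simpa [Finsupp.single_le_iff] using h

theorem coeff_mul_X_mul_X_of_eq_zero {m : σ →₀ ℕ} {i j : σ} (h : m i = 0 ∨ m j = 0)
    (p : MvPolynomial σ R) : coeff m (p * (X i * X j)) = 0 := by
  rcases h with h | h
  · rw [mul_comm (X i), ← mul_assoc, ← pow_one (X i)]
    exact coeff_mul_X_pow_of_lt (by omega) _
  · rw [← mul_assoc, ← pow_one (X j)]
    exact coeff_mul_X_pow_of_lt (by omega) _

theorem coeff_single_mul_X_pow (i : σ) (n : ℕ) (p : MvPolynomial σ R) :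
    coeff (Finsupp.single i n) (p * X i ^ n) = coeff 0 p := by
  rw [X_pow_eq_monomial]
  simpa using coeff_mul_monomial 0 (Finsupp.single i n) (1 : R) p

theorem idealOfVars_eq_ker_constantCoeff :
    idealOfVars σ R = RingHom.ker (constantCoeff (σ := σ) (R := R)) := by
  ext p
  rw [← pow_one (idealOfVars σ R), mem_pow_idealOfVars_iff', RingHom.mem_ker, constantCoeff_eq]
  simp [Finsupp.degree_eq_zero_iff]

end MvPolynomial

theorem Ideal.forall_mem_span_pair_mul_eq_zero_iff {A : Type*} [CommSemiring A] {a b x : A} :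
    (∀ y ∈ Ideal.span {a, b}, y * x = 0) ↔ a * x = 0 ∧ b * x = 0 := by
  refine ⟨fun h => ⟨h a (Ideal.subset_span (by simp)), h b (Ideal.subset_span (by simp))⟩,
    ?_⟩
  rintro ⟨ha, hb⟩ y hy
  obtain ⟨u, v, rfl⟩ := Ideal.mem_span_pair.mp hy
  rw [add_mul, mul_assoc, mul_assoc, ha, hb, mul_zero, mul_zero, add_zero]

namespace lamIdeal

variable {K : Type*} [Field K] {s t : ℕ} {p : MvPolynomial (Fin 2) K}

theorem X_mul_Y_mem : X 0 * X 1 ∈ lamIdeal K s t :=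
  Ideal.subset_span (by simp)

theorem X_pow_sub_Y_pow_mem : X 0 ^ s - X 1 ^ t ∈ lamIdeal K s t :=
  Ideal.subset_span (by simp)

theorem coeff_eq_zero_of_mem (hp : p ∈ lamIdeal K s t) {m : Fin 2 →₀ ℕ}
    (hm : m 0 = 0 ∨ m 1 = 0) (hs : m 0 < s) (ht : m 1 < t) : coeff m p = 0 := by
  obtain ⟨a, b, rfl⟩ := Ideal.mem_span_pair.mp hp
  rw [coeff_add, mul_sub, coeff_sub, coeff_mul_X_mul_X_of_eq_zero hm, coeff_mul_X_pow_of_lt hs,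
    coeff_mul_X_pow_of_lt ht, sub_zero, zero_add]

theorem coeff_X_pow_add_coeff_Y_pow_of_mem (hs : s ≠ 0) (ht : t ≠ 0)
    (hp : p ∈ lamIdeal K s t) :
    coeff (Finsupp.single 0 s) p + coeff (Finsupp.single 1 t) p = 0 := by
  obtain ⟨a, b, rfl⟩ := Ideal.mem_span_pair.mp hp
  simp only [coeff_add, mul_sub, coeff_sub, coeff_single_mul_X_pow]
  rw [coeff_mul_X_mul_X_of_eq_zero (by simp), coeff_mul_X_mul_X_of_eq_zero (by simp),
    coeff_mul_X_pow_of_lt (by simpa [Nat.pos_iff_ne_zero]),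
    coeff_mul_X_pow_of_lt (by simpa [Nat.pos_iff_ne_zero])]
  ring

theorem X_pow_succ_mem (ht : t ≠ 0) : X 0 ^ (s + 1) ∈ lamIdeal K s t := by
  obtain ⟨t, rfl⟩ := Nat.exists_eq_succ_of_ne_zero ht
  have h : (X 0 ^ (s + 1) : MvPolynomial (Fin 2) K) =
      X 0 * (X 0 ^ s - X 1 ^ (t + 1)) + X 1 ^ t * (X 0 * X 1) := by ring
  rw [h]
  exact add_mem (Ideal.mul_mem_left _ _ X_pow_sub_Y_pow_mem) (Ideal.mul_mem_left _ _ X_mul_Y_mem)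

theorem Y_pow_succ_mem (hs : s ≠ 0) : X 1 ^ (t + 1) ∈ lamIdeal K s t := by
  obtain ⟨s, rfl⟩ := Nat.exists_eq_succ_of_ne_zero hs
  have h : (X 1 ^ (t + 1) : MvPolynomial (Fin 2) K) =
      X 0 ^ s * (X 0 * X 1) - X 1 * (X 0 ^ (s + 1) - X 1 ^ t) := by ring
  rw [h]
  exact sub_mem (Ideal.mul_mem_left _ _ X_mul_Y_mem) (Ideal.mul_mem_left _ _ X_pow_sub_Y_pow_mem)

theorem span_monomial_le (hs : s ≠ 0) (ht : t ≠ 0) :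
    Ideal.span ((monomial · (1 : K)) ''
      {Finsupp.single 0 1 + Finsupp.single 1 1, Finsupp.single 0 (s + 1),
        Finsupp.single 1 (t + 1)}) ≤ lamIdeal K s t := by
  rw [Ideal.span_le]
  rintro _ ⟨m, hm, rfl⟩
  rcases hm with rfl | rfl | rfl <;> simp only [SetLike.mem_coe]
  · rw [← one_mul (1 : K), ← monomial_mul]
    exact X_mul_Y_mem
  · rw [← X_pow_eq_monomial]
    exact X_pow_succ_mem ht
  · rw [← X_pow_eq_monomial]
    exact Y_pow_succ_mem hs

theorem mem_of_coeff_eq_zero (hs : s ≠ 0) (ht : t ≠ 0)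
    (h0 : ∀ i ≤ s, coeff (Finsupp.single 0 i) p = 0)
    (h1 : ∀ j ≤ t, coeff (Finsupp.single 1 j) p = 0) : p ∈ lamIdeal K s t := by
  refine span_monomial_le hs ht (mem_ideal_span_monomial_image.mpr fun m hm => ?_)
  rw [mem_support_iff] at hm
  have hY : m 0 = 0 → t < m 1 := fun hm0 => lt_of_not_ge fun h => hm <| by
    rw [show m = Finsupp.single 1 (m 1) by ext i; fin_cases i <;> simp [hm0]]
    exact h1 _ h
  have hX : m 1 = 0 → s < m 0 := fun hm1 => lt_of_not_ge fun h => hm <| by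
    rw [show m = Finsupp.single 0 (m 0) by ext i; fin_cases i <;> simp [hm1]]
    exact h0 _ h
  simp only [Set.mem_insert_iff, Set.mem_singleton_iff, exists_eq_or_imp, exists_eq_left,
    Finsupp.le_def, Fin.forall_fin_two, Finsupp.coe_add, Pi.add_apply, Finsupp.single_eq_same,
    Finsupp.single_eq_of_ne zero_ne_one, Finsupp.single_eq_of_ne one_ne_zero]
  omega

theorem coeff_X_pow_eq_zero_of_mul_X_mem (hs : s ≠ 0) (ht : t ≠ 0)
    (hp : p * X 0 ∈ lamIdeal K s t) {i : ℕ} (hi : i < s) :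
    coeff (Finsupp.single 0 i) p = 0 := by
  rw [← coeff_mul_X _ 0, ← Finsupp.single_add]
  rcases (Nat.succ_le_of_lt hi).lt_or_eq with hi | rfl
  · exact coeff_eq_zero_of_mem hp (by simp) (by simpa) (by simpa [Nat.pos_iff_ne_zero])
  · simpa [coeff_mul_X'] using coeff_X_pow_add_coeff_Y_pow_of_mem hs ht hp

theorem coeff_Y_pow_eq_zero_of_mul_Y_mem (hs : s ≠ 0) (ht : t ≠ 0)
    (hp : p * X 1 ∈ lamIdeal K s t) {j : ℕ} (hj : j < t) :
    coeff (Finsupp.single 1 j) p = 0 := by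
  rw [← coeff_mul_X _ 1, ← Finsupp.single_add]
  rcases (Nat.succ_le_of_lt hj).lt_or_eq with hj | rfl
  · exact coeff_eq_zero_of_mem hp (by simp) (by simpa [Nat.pos_iff_ne_zero]) (by simpa)
  · simpa [coeff_mul_X'] using coeff_X_pow_add_coeff_Y_pow_of_mem hs ht hp

end lamIdeal

namespace lam

variable {K : Type*} [Field K] {s t : ℕ}

local notation "π" => Ideal.Quotient.mk (lamIdeal K s t)

theorem mk_X_pow_eq_mk_Y_pow : π (X 0 ^ s) = π (X 1 ^ t) :=
  Ideal.Quotient.eq.mpr lamIdeal.X_pow_sub_Y_pow_mem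

theorem mk_X_mul_mk_X_pow (ht : t ≠ 0) : π (X 0) * π (X 0 ^ s) = 0 := by
  rw [← map_mul, ← pow_succ', Ideal.Quotient.eq_zero_iff_mem]
  exact lamIdeal.X_pow_succ_mem ht

theorem mk_Y_mul_mk_X_pow (hs : s ≠ 0) : π (X 1) * π (X 0 ^ s) = 0 := by
  obtain ⟨s, rfl⟩ := Nat.exists_eq_succ_of_ne_zero hs
  rw [← map_mul, Ideal.Quotient.eq_zero_iff_mem,
    show (X 1 * X 0 ^ (s + 1) : MvPolynomial (Fin 2) K) = X 0 ^ s * (X 0 * X 1) by ring]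
  exact Ideal.mul_mem_left _ _ lamIdeal.X_mul_Y_mem

theorem mk_X_pow_ne_zero (hs : s ≠ 0) (ht : t ≠ 0) : π (X 0 ^ s) ≠ 0 := by
  rw [Ne, Ideal.Quotient.eq_zero_iff_mem]
  intro h
  simpa [coeff_X_pow, Finsupp.single_eq_single_iff, hs] using
    lamIdeal.coeff_X_pow_add_coeff_Y_pow_of_mem hs ht h

theorem mk_eq_smul_of_mul_X_mem_of_mul_Y_mem (hs : s ≠ 0) (ht : t ≠ 0)
    {p : MvPolynomial (Fin 2) K} (h0 : p * X 0 ∈ lamIdeal K s t)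
    (h1 : p * X 1 ∈ lamIdeal K s t) :
    π p = (coeff (Finsupp.single 0 s) p + coeff (Finsupp.single 1 t) p) • π (X 0 ^ s) := by
  set a := coeff (Finsupp.single 0 s) p
  set b := coeff (Finsupp.single 1 t) p
  have hr : p - (a • X 0 ^ s + b • X 1 ^ t) ∈ lamIdeal K s t := by
    refine lamIdeal.mem_of_coeff_eq_zero hs ht (fun i hi => ?_) (fun j hj => ?_)
    · rcases hi.lt_or_eq with hi | rfl
      · simp [coeff_X_pow, Finsupp.single_eq_single_iff, hi.ne',
          lamIdeal.coeff_X_pow_eq_zero_of_mul_X_mem hs ht h0 hi, hs, ht]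
      · simp [coeff_X_pow, Finsupp.single_eq_single_iff, hs, a]
    · rcases hj.lt_or_eq with hj | rfl
      · simp [coeff_X_pow, Finsupp.single_eq_single_iff, hj.ne',
          lamIdeal.coeff_Y_pow_eq_zero_of_mul_Y_mem hs ht h1 hj, hs, ht]
      · simp [coeff_X_pow, Finsupp.single_eq_single_iff, ht, b]
  rw [Ideal.Quotient.eq.mpr hr, map_add, ← Ideal.Quotient.mkₐ_eq_mk K, map_smul, map_smul,
    Ideal.Quotient.mkₐ_eq_mk, ← mk_X_pow_eq_mk_Y_pow, add_smul]

theorem mul_eq_zero_iff_exists_smul (hs : s ≠ 0) (ht : t ≠ 0) {x : lam K s t} :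
    π (X 0) * x = 0 ∧ π (X 1) * x = 0 ↔ ∃ c : K, c • π (X 0 ^ s) = x := by
  obtain ⟨p, rfl⟩ := Ideal.Quotient.mk_surjective x
  constructor
  · rintro ⟨h0, h1⟩
    rw [← map_mul, Ideal.Quotient.eq_zero_iff_mem, mul_comm] at h0 h1
    exact ⟨_, (mk_eq_smul_of_mul_X_mem_of_mul_Y_mem hs ht h0 h1).symm⟩
  · rintro ⟨c, hc⟩
    rw [← hc, mul_smul_comm, mul_smul_comm, mk_X_mul_mk_X_pow ht, mk_Y_mul_mk_X_pow hs,
      smul_zero]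
    exact ⟨rfl, rfl⟩

theorem isMaximal_span_mk_X_mk_Y (hs : s ≠ 0) (ht : t ≠ 0) :
    (Ideal.span {π (X 0), π (X 1)}).IsMaximal := by
  have hI : lamIdeal K s t ≤ RingHom.ker (constantCoeff : MvPolynomial (Fin 2) K →+* K) := by
    simp [Ideal.span_le, Set.insert_subset_iff, hs, ht]
  let ε := Ideal.Quotient.lift (lamIdeal K s t) constantCoeff fun _ ha => hI ha
  have hε : ε.comp π = constantCoeff := RingHom.ext fun _ => rfl
  have hker : Ideal.span {π (X 0), π (X 1)} = RingHom.ker ε := by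
    rw [← Ideal.map_comap_of_surjective _ Ideal.Quotient.mk_surjective (RingHom.ker ε),
      RingHom.comap_ker, hε, ← idealOfVars_eq_ker_constantCoeff, Ideal.map_span]
    congr 1
    ext
    simp [Fin.exists_fin_two, eq_comm]
  rw [hker]
  exact RingHom.ker_isMaximal_of_surjective ε fun c => ⟨π (C c), constantCoeff_C _ c⟩

theorem jacobson_bot_eq (hs : s ≠ 0) (ht : t ≠ 0) :
    (⊥ : Ideal (lam K s t)).jacobson = Ideal.span {π (X 0), π (X 1)} := by
  refine le_antisymm (sInf_le ⟨bot_le, isMaximal_span_mk_X_mk_Y hs ht⟩) ?_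
  refine Ideal.span_le.mpr fun x hx => Ideal.radical_le_jacobson (mem_nilradical.mpr ?_)
  rcases hx with rfl | rfl
  · exact ⟨s + 1, by
      rw [← map_pow, Ideal.Quotient.eq_zero_iff_mem]; exact lamIdeal.X_pow_succ_mem ht⟩
  · exact ⟨t + 1, by
      rw [← map_pow, Ideal.Quotient.eq_zero_iff_mem]; exact lamIdeal.Y_pow_succ_mem hs⟩

end lam

/-- In `Λ = K[X,Y]/(XY, X^s - Y^t)` with `s, t ≥ 2`, the Jacobson radical is generated by the
images of `X` and `Y`, and the socle (annihilator of the radical) is one-dimensional, spanned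
by the image of `X^s`. -/
theorem stmt3 (K : Type*) [Field K] (s t : ℕ) (hs : 2 ≤ s) (ht : 2 ≤ t) :
    (Ideal.jacobson (⊥ : Ideal (lam K s t)) =
      Ideal.span {Ideal.Quotient.mk (lamIdeal K s t) (X 0),
        Ideal.Quotient.mk (lamIdeal K s t) (X 1)}) ∧
    Ideal.Quotient.mk (lamIdeal K s t) (X (0 : Fin 2) ^ s) ≠ 0 ∧
    {x : lam K s t | ∀ y ∈ Ideal.span {Ideal.Quotient.mk (lamIdeal K s t) (X 0),
        Ideal.Quotient.mk (lamIdeal K s t) (X 1)}, y * x = 0} =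
      Set.range (fun c : K => c • Ideal.Quotient.mk (lamIdeal K s t) (X (0 : Fin 2) ^ s)) := by
  have hs0 : s ≠ 0 := by omega
  have ht0 : t ≠ 0 := by omega
  refine ⟨lam.jacobson_bot_eq hs0 ht0, lam.mk_X_pow_ne_zero hs0 ht0, ?_⟩
  ext x
  rw [Set.mem_ofPred_eq, Ideal.forall_mem_span_pair_mul_eq_zero_iff,
    lam.mul_eq_zero_iff_exists_smul hs0 ht0, Set.mem_range]
end

section
/- Let K be a field and s, t ≥ 2. The K-algebra Λ = K[X,Y]/(XY, X^s − Y^t) is a symmetric algebra: the linear map f: Λ → K defined on the basis {1, X, …, X^s, Y, …, Y^{t−1}} by f(X^s) = 1 and f(b) = 0 for all other basis elements b, has kernel containing no nonzero ideal of Λ. -/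
open MvPolynomial

theorem Ideal.eq_bot_of_forall_apply_eq_zero_of_dual {K A ι : Type*} [CommSemiring K]
    [Semiring A] [Algebra K A] [Fintype ι] [DecidableEq ι] {f : A →ₗ[K] K} {e μ : ι → A}
    (he : Submodule.span K (Set.range e) = ⊤)
    (hdual : ∀ k k', f (μ k * e k') = if k = k' then 1 else 0)
    (I : Ideal A) (hI : ∀ a ∈ I, f a = 0) : I = ⊥ := by
  refine (Submodule.eq_bot_iff I).2 fun a ha => ?_
  have ha' : a ∈ Submodule.span K (Set.range e) := he ▸ Submodule.mem_top
  obtain ⟨c, rfl⟩ := (Submodule.mem_span_range_iff_exists_fun K).1 ha'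
  have hc : ∀ k, c k = 0 := fun k => by
    simpa [Finset.mul_sum, hdual] using hI _ (I.mul_mem_left (μ k) ha)
  simp [hc]

namespace lam

variable {K : Type*} [Field K] {s t : ℕ}

local notation "𝐱" => Ideal.Quotient.mk (lamIdeal K s t) (X 0)
local notation "𝐲" => Ideal.Quotient.mk (lamIdeal K s t) (X 1)

theorem x_mul_y : 𝐱 * 𝐲 = 0 := by
  rw [← map_mul, Ideal.Quotient.eq_zero_iff_mem]
  exact Ideal.subset_span (by simp)

theorem x_pow_eq_y_pow : 𝐱 ^ s = 𝐲 ^ t := by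
  rw [← map_pow, ← map_pow, Ideal.Quotient.eq]
  exact Ideal.subset_span (by simp)

theorem x_pow_mul_y_pow_eq_zero {a b : ℕ} (ha : a ≠ 0) (hb : b ≠ 0) : 𝐱 ^ a * 𝐲 ^ b = 0 := by
  obtain ⟨a, rfl⟩ := Nat.exists_eq_succ_of_ne_zero ha
  obtain ⟨b, rfl⟩ := Nat.exists_eq_succ_of_ne_zero hb
  rw [pow_succ, pow_succ', mul_assoc, ← mul_assoc 𝐱, x_mul_y, zero_mul, mul_zero]

theorem x_pow_eq_zero (ht : t ≠ 0) {k : ℕ} (hk : s < k) : 𝐱 ^ k = 0 := by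
  rw [← Nat.sub_add_cancel hk.le, pow_add, x_pow_eq_y_pow]
  exact x_pow_mul_y_pow_eq_zero (by omega) ht

theorem y_pow_eq_zero (hs : s ≠ 0) {k : ℕ} (hk : t < k) : 𝐲 ^ k = 0 := by
  rw [← Nat.add_sub_cancel' hk.le, pow_add, ← x_pow_eq_y_pow]
  exact x_pow_mul_y_pow_eq_zero hs (by omega)

-- `inr j` stands for `y ^ (j + 1)`, so that `1` is listed only once.
variable (K s t) in
noncomputable def monomials : Fin (s + 1) ⊕ Fin (t - 1) → lam K s t :=
  Sum.elim (fun i => 𝐱 ^ (i : ℕ)) (fun j => 𝐲 ^ ((j : ℕ) + 1))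

variable (K s t) in
noncomputable def dualMonomials : Fin (s + 1) ⊕ Fin (t - 1) → lam K s t :=
  Sum.elim (fun i => 𝐱 ^ (s - i)) (fun j => 𝐲 ^ (t - 1 - j))

theorem mk_monomial (u : Fin 2 →₀ ℕ) (c : K) :
    Ideal.Quotient.mk (lamIdeal K s t) (monomial u c) = c • (𝐱 ^ u 0 * 𝐲 ^ u 1) := by
  rw [monomial_eq, Finsupp.prod_fintype _ _ (by simp), Fin.prod_univ_two]
  simp only [map_mul, map_pow]
  exact (Algebra.smul_def (A := lam K s t) c _).symm

theorem span_monomials (hs : s ≠ 0) (ht : t ≠ 0) :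
    Submodule.span K (Set.range (monomials K s t)) = ⊤ := by
  set S := Submodule.span K (Set.range (monomials K s t))
  have hx (n : ℕ) : 𝐱 ^ n ∈ S := by
    rcases le_or_gt n s with h | h
    · exact Submodule.subset_span ⟨.inl ⟨n, by omega⟩, rfl⟩
    · rw [x_pow_eq_zero ht h]
      exact S.zero_mem
  have hy (n : ℕ) : 𝐲 ^ n ∈ S := by
    rcases Nat.eq_zero_or_pos n with rfl | hn
    · simpa using hx 0
    rcases lt_trichotomy n t with h | rfl | h
    · refine Submodule.subset_span ⟨.inr ⟨n - 1, by omega⟩, ?_⟩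
      simp [monomials, Nat.sub_add_cancel hn]
    · exact x_pow_eq_y_pow (K := K) ▸ hx s
    · rw [y_pow_eq_zero hs h]
      exact S.zero_mem
  have hxy (a b : ℕ) : 𝐱 ^ a * 𝐲 ^ b ∈ S := by
    rcases eq_or_ne a 0 with rfl | ha
    · simpa using hy b
    rcases eq_or_ne b 0 with rfl | hb
    · simpa using hx a
    rw [x_pow_mul_y_pow_eq_zero ha hb]
    exact S.zero_mem
  refine Submodule.eq_top_iff'.2 fun z => ?_
  obtain ⟨p, rfl⟩ := Ideal.Quotient.mk_surjective z
  induction p using MvPolynomial.induction_on' with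
  | monomial u c => exact mk_monomial u c ▸ S.smul_mem c (hxy _ _)
  | add p q hp hq => rw [map_add]; exact S.add_mem hp hq

theorem apply_x_pow_mul_y_pow {f : lam K s t →ₗ[K] K} (hs : s ≠ 0) (ht : t ≠ 0)
    (hXs : f (𝐱 ^ s) = 1) (hXi : ∀ i < s, f (𝐱 ^ i) = 0)
    (hYj : ∀ j, 1 ≤ j → j < t → f (𝐲 ^ j) = 0) (a b : ℕ) :
    f (𝐱 ^ a * 𝐲 ^ b) = if a = s ∧ b = 0 ∨ a = 0 ∧ b = t then 1 else 0 := by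
  rcases Nat.eq_zero_or_pos b with rfl | hb
  · rw [pow_zero, mul_one]
    rcases lt_trichotomy a s with h | rfl | h
    · rw [hXi a h, if_neg (by omega)]
    · rw [hXs, if_pos (by omega)]
    · rw [x_pow_eq_zero ht h, map_zero, if_neg (by omega)]
  rcases Nat.eq_zero_or_pos a with rfl | ha
  · rw [pow_zero, one_mul]
    rcases lt_trichotomy b t with h | rfl | h
    · rw [hYj b hb h, if_neg (by omega)]
    · rw [← x_pow_eq_y_pow, hXs, if_pos (by omega)]
    · rw [y_pow_eq_zero hs h, map_zero, if_neg (by omega)]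
  rw [x_pow_mul_y_pow_eq_zero ha.ne' hb.ne', map_zero, if_neg (by omega)]

theorem apply_dualMonomials_mul_monomials {f : lam K s t →ₗ[K] K} (ht : t ≠ 0)
    (hf : ∀ a b, f (𝐱 ^ a * 𝐲 ^ b) = if a = s ∧ b = 0 ∨ a = 0 ∧ b = t then 1 else 0)
    (k k' : Fin (s + 1) ⊕ Fin (t - 1)) :
    f (dualMonomials K s t k * monomials K s t k') = if k = k' then 1 else 0 := by
  rcases k with ⟨i, hi⟩ | ⟨j, hj⟩ <;> rcases k' with ⟨i', hi'⟩ | ⟨j', hj'⟩ <;>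
    simp only [dualMonomials, monomials, Sum.elim_inl, Sum.elim_inr]
  on_goal 1 => rw [← pow_add, ← mul_one (𝐱 ^ _), ← pow_zero 𝐲, hf]
  on_goal 2 => rw [hf]
  on_goal 3 => rw [mul_comm, hf]
  on_goal 4 => rw [← pow_add, ← one_mul (𝐲 ^ _), ← pow_zero 𝐱, hf]
  all_goals
    refine if_congr ?_ rfl rfl
    simp only [Sum.inl.injEq, Sum.inr.injEq, reduceCtorEq, Fin.mk.injEq, and_true, and_false,
      true_and, false_or, iff_false]
    omega

end lam

/-- `Λ = K[X,Y]/(XY, X^s - Y^t)` is a symmetric algebra: the linear form `f` defined on the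
basis `{1, X, …, X^s, Y, …, Y^{t-1}}` by `f(X^s) = 1` and `f(b) = 0` for all other basis
elements has kernel containing no nonzero ideal of `Λ`. -/
theorem stmt4 (K : Type*) [Field K] (s t : ℕ) (hs : 2 ≤ s) (ht : 2 ≤ t)
    (f : lam K s t →ₗ[K] K)
    (hXs : f (Ideal.Quotient.mk (lamIdeal K s t) (X (0 : Fin 2) ^ s)) = 1)
    (hXi : ∀ i : ℕ, i < s → f (Ideal.Quotient.mk (lamIdeal K s t) (X (0 : Fin 2) ^ i)) = 0)
    (hYj : ∀ j : ℕ, 1 ≤ j → j < t →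
      f (Ideal.Quotient.mk (lamIdeal K s t) (X (1 : Fin 2) ^ j)) = 0) :
    ∀ I : Ideal (lam K s t), (∀ x ∈ I, f x = 0) → I = ⊥ := by
  have hs₀ : s ≠ 0 := by omega
  have ht₀ : t ≠ 0 := by omega
  simp only [map_pow] at hXs hXi hYj
  have hf := lam.apply_x_pow_mul_y_pow hs₀ ht₀ hXs hXi hYj
  exact Ideal.eq_bot_of_forall_apply_eq_zero_of_dual (lam.span_monomials hs₀ ht₀)
    (lam.apply_dualMonomials_mul_monomials ht₀ hf)
end

section
/- Let u ≥ 0 and r ≥ 1 be integers, and let C be the (u+1)×(u+1) integer matrix whose (1,1) entry is 4r, whose remaining first-row and first-column entries are all 2r, and whose lower-right u×u block is I_u + r·J_u (identity plus r times the all-ones matrix). Then det C = 4r. -/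
/-!
The matrix is a rank-two perturbation of the identity: with `v = (2, 1, …, 1)` and
`e = (1, 0, …, 0)` it equals `1 + r • v vᵀ - e eᵀ`. By Sylvester's identity
`det (1 + A B) = det (1 + B A)` its determinant is that of a `2 × 2` matrix built from the
inner products `v ⬝ v = u + 4`, `v ⬝ e = 2` and `e ⬝ e = 1`, namely `4r`.
-/

open Matrix

theorem Matrix.det_one_add_vecMulVec_add_vecMulVec {n R : Type*} [Fintype n] [DecidableEq n]
    [CommRing R] (x y z w : n → R) :
    det (1 + vecMulVec x y + vecMulVec z w) = (1 + y ⬝ᵥ x) * (1 + w ⬝ᵥ z) - (y ⬝ᵥ z) * (w ⬝ᵥ x) := by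
  let A : Matrix n (Fin 2) R := of fun i => ![x i, z i]
  let B : Matrix (Fin 2) n R := of ![y, w]
  have hAB : vecMulVec x y + vecMulVec z w = A * B := by
    ext i j
    simp [A, B, mul_apply, Fin.sum_univ_two, vecMulVec_apply]
  have hBA : 1 + B * A = !![1 + y ⬝ᵥ x, y ⬝ᵥ z; w ⬝ᵥ x, 1 + w ⬝ᵥ z] := by
    ext k l
    fin_cases k <;> fin_cases l <;>
      simp [A, B, vecMul, dotProduct, mul_comm]
  rw [add_assoc, hAB, det_one_add_mul_comm, hBA, det_fin_two_of]

theorem stmt5_general (u r : ℕ) :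
    Matrix.det (Matrix.of fun i j : Fin (u + 1) =>
      if (i : ℕ) = 0 then (if (j : ℕ) = 0 then 4 * (r : ℤ) else 2 * (r : ℤ))
      else if (j : ℕ) = 0 then 2 * (r : ℤ)
      else (if i = j then 1 else 0) + (r : ℤ)) = 4 * (r : ℤ) := by
  let v : Fin (u + 1) → ℤ := Fin.cons 2 1
  let e : Fin (u + 1) → ℤ := Pi.single 0 1
  have hvv : v ⬝ᵥ ((r : ℤ) • v) = r * (u + 4) := by
    simp [v, dotProduct, Fin.sum_univ_succ]; ring
  have hve : v ⬝ᵥ (-e) = -2 := by simp [v, e, dotProduct, Fin.sum_univ_succ]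
  have hev : e ⬝ᵥ ((r : ℤ) • v) = 2 * r := by simp [v, e, dotProduct, Fin.sum_univ_succ]; ring
  have hee : e ⬝ᵥ (-e) = -1 := by simp [e, dotProduct, Fin.sum_univ_succ]
  calc _ = det (1 + vecMulVec ((r : ℤ) • v) v + vecMulVec (-e) e : Matrix _ _ ℤ) := by
        congr 1
        ext i j
        cases i using Fin.cases <;> cases j using Fin.cases <;>
          simp [v, e, vecMulVec_apply, one_apply, (Fin.succ_ne_zero _).symm] <;> ring
    _ = 4 * r := by
        rw [det_one_add_vecMulVec_add_vecMulVec, hvv, hve, hev, hee]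
        ring

/-- The determinant of the `(u+1) × (u+1)` integer matrix with `(1,1)` entry `4r`, remaining
first-row and first-column entries `2r`, and lower-right `u × u` block `I_u + r·J_u`,
is `4r`. -/
theorem stmt5 (u r : ℕ) (hr : 1 ≤ r) :
    Matrix.det (Matrix.of fun i j : Fin (u + 1) =>
      if (i : ℕ) = 0 then (if (j : ℕ) = 0 then 4 * (r : ℤ) else 2 * (r : ℤ))
      else if (j : ℕ) = 0 then 2 * (r : ℤ)
      else (if i = j then 1 else 0) + (r : ℤ)) = 4 * (r : ℤ) :=
  stmt5_general u r
end

section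
/- Let p, q ≥ 1, s, t ≥ 1 be integers and set u = p+q−2. Let C be the (u+1)×(u+1) integer matrix with (1,1) entry s+t, first-row and first-column entries t in positions 2,…,p and s in positions p+1,…,p+q−1, a block I_{p−1} + t·J_{p−1} in rows/columns 2,…,p, a block I_{q−1} + s·J_{q−1} in rows/columns p+1,…,p+q−1, and zeros elsewhere. Then det C = s + t + (p+q−2)st. -/
/-!
Write `a`, `b`, `e` for the indicator vectors of `{0, …, p-1}`, `{0} ∪ {p, …, p+q-2}` and `{0}`.
Then `C = I - e eᵀ + t a aᵀ + s b bᵀ` is a rank-three perturbation of the identity, so by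
Sylvester's determinant identity `det C = det (I₃ + diag(t, s, -1) G)`, where `G` is the Gram
matrix of `a, b, e`. Since the supports of `a` and `b` meet only in `0`, `G` has diagonal
`(p, q, 1)` and all other entries `1`, and the `3 × 3` determinant is `s + t + (p+q-2)st`.
-/

/-- The Cartan matrix of `Λ(p,q;s,t)`: the `(p+q-1) × (p+q-1)` integer matrix with `(1,1)` entry
`s+t`, first-row and first-column entries `t` in positions `2,…,p` and `s` in positions
`p+1,…,p+q-1`, diagonal blocks `I_{p-1} + t·J_{p-1}` and `I_{q-1} + s·J_{q-1}`, and zeros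
elsewhere. -/
def cartanLam (p q s t : ℕ) : Matrix (Fin (p + q - 1)) (Fin (p + q - 1)) ℤ :=
  Matrix.of fun i j =>
    if (i : ℕ) = 0 then
      (if (j : ℕ) = 0 then (s : ℤ) + t else if (j : ℕ) < p then (t : ℤ) else (s : ℤ))
    else if (j : ℕ) = 0 then (if (i : ℕ) < p then (t : ℤ) else (s : ℤ))
    else if (i : ℕ) < p ∧ (j : ℕ) < p then (if i = j then 1 else 0) + (t : ℤ)
    else if p ≤ (i : ℕ) ∧ p ≤ (j : ℕ) then (if i = j then 1 else 0) + (s : ℤ)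
    else 0

open Matrix Finset

theorem sum_boole_mul_boole {ι R : Type*} [Fintype ι] [NonAssocSemiring R]
    (P Q : ι → Prop) [DecidablePred P] [DecidablePred Q] :
    ∑ i, (if P i then (1 : R) else 0) * (if Q i then 1 else 0) = #{i | P i ∧ Q i} := by
  simp only [ite_zero_mul_ite_zero, mul_one, sum_boole]

theorem Fin.card_filter_eq_one_of_iff_val_eq_zero {n : ℕ} (hn : 0 < n) {P : Fin n → Prop}
    [DecidablePred P] (hP : ∀ i, P i ↔ (i : ℕ) = 0) : #{i | P i} = 1 :=
  card_eq_one.2 ⟨⟨0, hn⟩, by ext i; simp [hP, Fin.ext_iff]⟩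

theorem Fin.card_filter_val_eq_zero_or_le {n p : ℕ} (hp : 1 ≤ p) (hpn : p ≤ n) :
    #{i : Fin n | (i : ℕ) = 0 ∨ p ≤ i} = n + 1 - p := by
  rw [filter_or, card_union_of_disjoint (disjoint_filter.2 fun i _ h => by omega),
    Fin.card_filter_eq_one_of_iff_val_eq_zero (by omega) fun _ => Iff.rfl]
  have hsplit := card_filter_add_card_filter_not (s := univ) fun i : Fin n => (i : ℕ) < p
  simp only [not_lt, card_univ, Fintype.card_fin, Fin.card_filter_val_lt] at hsplit
  omega

def cartanLamVectors (n p : ℕ) : Matrix (Fin 3) (Fin n) ℤ :=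
  of ![fun i => if (i : ℕ) < p then 1 else 0,
    fun i => if (i : ℕ) = 0 ∨ p ≤ i then 1 else 0,
    fun i => if (i : ℕ) = 0 then 1 else 0]

theorem cartanLam_eq_one_add_transpose_mul {p q s t : ℕ} (hp : 1 ≤ p) :
    cartanLam p q s t = 1 + (cartanLamVectors _ p)ᵀ *
      (diagonal ![(t : ℤ), s, -1] * cartanLamVectors _ p) := by
  ext i j
  simp only [cartanLam, cartanLamVectors, of_apply, Matrix.add_apply, one_apply, mul_apply,
    transpose_apply, Fin.sum_univ_three]
  split_ifs <;> simp_all [Fin.ext_iff] <;> omega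

theorem cartanLamVectors_mul_transpose {p q : ℕ} (hp : 1 ≤ p) (hq : 1 ≤ q) :
    cartanLamVectors (p + q - 1) p * (cartanLamVectors (p + q - 1) p)ᵀ =
      !![(p : ℤ), 1, 1; 1, q, 1; 1, 1, 1] := by
  ext k l
  fin_cases k <;> fin_cases l <;>
    simp only [mul_apply, transpose_apply, cartanLamVectors, of_apply, Fin.zero_eta, Fin.mk_one,
      Fin.reduceFinMk, Matrix.cons_val, sum_boole_mul_boole, and_self] <;> norm_cast
  all_goals first
    | exact Fin.card_filter_eq_one_of_iff_val_eq_zero (by omega) fun _ => by omega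
    | rw [Fin.card_filter_val_lt]; omega
    | rw [Fin.card_filter_val_eq_zero_or_le hp (by omega)]; omega

theorem stmt6_general (p q s t : ℕ) (hp : 1 ≤ p) (hq : 1 ≤ q) :
    Matrix.det (cartanLam p q s t) = (s : ℤ) + t + ((p + q - 2 : ℕ) : ℤ) * s * t := by
  rw [cartanLam_eq_one_add_transpose_mul hp, det_one_add_mul_comm, Matrix.mul_assoc,
    cartanLamVectors_mul_transpose hp hq]
  have hpq : ((p + q - 2 : ℕ) : ℤ) = p + q - 2 := by omega
  simp [det_fin_three, hpq]
  ring

/-- The determinant of the Cartan matrix of `Λ(p,q;s,t)` is `s + t + (p+q-2)st`. -/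
theorem stmt6 (p q s t : ℕ) (hp : 1 ≤ p) (hq : 1 ≤ q) (hs : 1 ≤ s) (ht : 1 ≤ t) :
    Matrix.det (cartanLam p q s t) = (s : ℤ) + t + ((p + q - 2 : ℕ) : ℤ) * s * t :=
  stmt6_general p q s t hp hq
end

section
/- Let r ≥ 1, u ≥ 0, and let C be the (u+1)×(u+1) integer matrix with (1,1) entry 4r, remaining first-row and first-column entries 2r, and lower-right block I_u + r·J_u. If r·u is even then the Smith normal form of C is diag(1,…,1, 4r); if r·u is odd then the Smith normal form of C is diag(1,…,1, 2, 2r). -/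
/-!
Subtracting the last row from the middle rows and adding the middle columns to the last column
turns the middle rows into unit vectors, which then clear the middle columns. What remains is the
identity on the middle indices and the block `B = [[4r, 2ru], [2r, 1 + ru]]` on the first and last
indices. Since `det B = 4r` and `r` is prime to `1 + ru`, the gcd of the entries of `B` is `1` when
`ru` is even and `2` when `ru` is odd, so explicit unimodular `2 × 2` matrices reduce `B` to
`diag(1, 4r)`, resp. `diag(2, 2r)`. A transposition finally moves the first diagonal entry next to
the last one.
-/

/-- The Cartan matrix of `Γ(p,q;r)` with `u = p+q-2`: `(1,1)` entry `4r`, remaining border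
entries `2r`, lower-right block `I_u + r·J_u`. -/
def cartanGam (u r : ℕ) : Matrix (Fin (u + 1)) (Fin (u + 1)) ℤ :=
  Matrix.of fun i j =>
    if (i : ℕ) = 0 then (if (j : ℕ) = 0 then 4 * (r : ℤ) else 2 * (r : ℤ))
    else if (j : ℕ) = 0 then 2 * (r : ℤ)
    else (if i = j then 1 else 0) + (r : ℤ)

open Matrix

namespace Matrix

variable {m n R : Type*} [Fintype m] [DecidableEq m] [Fintype n] [DecidableEq n] [CommRing R]

def Equivalent (A B : Matrix n n R) : Prop :=
  ∃ U V : Matrix n n R, IsUnit U.det ∧ IsUnit V.det ∧ U * A * V = B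

namespace Equivalent

theorem of_isUnit {A B U V : Matrix n n R} (hU : IsUnit U) (hV : IsUnit V)
    (h : U * A * V = B) : Equivalent A B :=
  ⟨U, V, (isUnit_iff_isUnit_det U).mp hU, (isUnit_iff_isUnit_det V).mp hV, h⟩

theorem trans {A B C : Matrix n n R} (hAB : Equivalent A B) (hBC : Equivalent B C) :
    Equivalent A C := by
  obtain ⟨U, V, hU, hV, rfl⟩ := hAB
  obtain ⟨U', V', hU', hV', rfl⟩ := hBC
  refine ⟨U' * U, V * V', ?_, ?_, by simp only [Matrix.mul_assoc]⟩ <;>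
    simp only [det_mul, IsUnit.mul, *]

theorem map {A B : Matrix m m R} (hAB : Equivalent A B) (f : Matrix m m R →* Matrix n n R) :
    Equivalent (f A) (f B) := by
  obtain ⟨U, V, hU, hV, rfl⟩ := hAB
  exact of_isUnit (((isUnit_iff_isUnit_det U).mpr hU).map f)
    (((isUnit_iff_isUnit_det V).mpr hV).map f) (by simp only [map_mul])

theorem diagonal_comp_perm (d : n → R) (σ : Equiv.Perm n) :
    Equivalent (diagonal d) (diagonal (d ∘ σ)) := by
  refine ⟨σ.permMatrix R, σ⁻¹.permMatrix R, ?_, ?_, ?_⟩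
  · simpa using (Equiv.Perm.sign σ).isUnit.map (Int.castRingHom R)
  · simpa using (Equiv.Perm.sign σ⁻¹).isUnit.map (Int.castRingHom R)
  · rw [PEquiv.toMatrix_toPEquiv_mul, PEquiv.mul_toMatrix_toPEquiv, submatrix_submatrix]
    exact submatrix_diagonal_equiv d σ

end Equivalent

end Matrix

namespace CartanGam

section Block

variable {R : Type*} [CommRing R]

def cornerBlock (r w : R) : Matrix (Fin 2) (Fin 2) R :=
  !![4 * r, 2 * (r * w); 2 * r, 1 + r * w]

theorem cornerBlock_equivalent_of_even {r w : R} (h : Even (r * w)) :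
    Equivalent (cornerBlock r w) (diagonal ![1, 4 * r]) := by
  obtain ⟨m, hm⟩ := h
  refine ⟨!![m, 1 - 2 * m; 2 * m + 1, -(4 * m)], !![0, 1; 1, -(2 * r)], ?_, ?_, ?_⟩
  · rw [det_fin_two_of, show m * -(4 * m) - (1 - 2 * m) * (2 * m + 1) = -1 by ring]
    exact isUnit_one.neg
  · rw [det_fin_two_of, show 0 * -(2 * r) - 1 * 1 = -1 by ring]
    exact isUnit_one.neg
  · rw [cornerBlock, hm]
    ext i j
    fin_cases i <;> fin_cases j <;> simp [mul_apply, Fin.sum_univ_two] <;> ring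

theorem cornerBlock_equivalent_of_odd {r w : R} (h : Odd (r * w)) :
    Equivalent (cornerBlock r w) (diagonal ![2, 2 * r]) := by
  obtain ⟨m, hm⟩ := h
  refine ⟨!![-1, 2; m + 1, -(2 * m + 1)], !![0, 1; 1, 0], ?_, ?_, ?_⟩
  · rw [det_fin_two_of, show -1 * -(2 * m + 1) - 2 * (m + 1) = -1 by ring]
    exact isUnit_one.neg
  · rw [det_fin_two_of, show (0 : R) * 0 - 1 * 1 = -1 by ring]
    exact isUnit_one.neg
  · rw [cornerBlock, hm]
    ext i j
    fin_cases i <;> fin_cases j <;> simp [mul_apply, Fin.sum_univ_two] <;> ring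

end Block

section Index

variable {v : ℕ}

def mid (k : Fin v) : Fin (v + 2) := k.succ.castSucc

@[simp] theorem val_mid (k : Fin v) : (mid k : ℕ) = k + 1 := rfl

@[simp] theorem mid_inj {k l : Fin v} : mid k = mid l ↔ k = l := by
  rw [mid, mid, Fin.castSucc_inj, Fin.succ_inj]

@[simp] theorem val_ne_self (k : Fin v) : (k : ℕ) ≠ v := k.isLt.ne

@[simp] theorem mid_ne_zero (k : Fin v) : mid k ≠ 0 := by simp [Fin.ext_iff]

@[simp] theorem zero_ne_mid (k : Fin v) : 0 ≠ mid k := (mid_ne_zero k).symm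

@[simp] theorem mid_ne_last (k : Fin v) : mid k ≠ Fin.last (v + 1) := by simp [Fin.ext_iff]

@[simp] theorem last_ne_mid (k : Fin v) : Fin.last (v + 1) ≠ mid k := (mid_ne_last k).symm

theorem eq_zero_or_eq_mid_or_eq_last (i : Fin (v + 2)) :
    i = 0 ∨ (∃ k, i = mid k) ∨ i = Fin.last (v + 1) := by
  induction i using Fin.lastCases with
  | last => exact .inr (.inr rfl)
  | cast i =>
    induction i using Fin.cases with
    | zero => exact .inl rfl
    | succ k => exact .inr (.inl ⟨k, rfl⟩)

theorem sum_univ_zero_mid_last {M : Type*} [AddCommMonoid M] (f : Fin (v + 2) → M) :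
    ∑ i, f i = f 0 + ∑ k, f (mid k) + f (Fin.last (v + 1)) := by
  rw [Fin.sum_univ_castSucc, Fin.sum_univ_succ]
  rfl

end Index

section Embedding

variable {R : Type*} [CommRing R]

def cornerEmbed (v : ℕ) : Matrix (Fin 2) (Fin 2) R →* Matrix (Fin (v + 2)) (Fin (v + 2)) R where
  toFun b := of fun i j =>
    if (i : ℕ) = 0 then (if (j : ℕ) = 0 then b 0 0 else if (j : ℕ) = v + 1 then b 0 1 else 0)
    else if (i : ℕ) = v + 1 then
      (if (j : ℕ) = 0 then b 1 0 else if (j : ℕ) = v + 1 then b 1 1 else 0)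
    else if (i : ℕ) = j then 1 else 0
  map_one' := by
    ext i j
    rcases eq_zero_or_eq_mid_or_eq_last i with rfl | ⟨k, rfl⟩ | rfl <;>
      rcases eq_zero_or_eq_mid_or_eq_last j with rfl | ⟨l, rfl⟩ | rfl <;>
      simp [one_apply, Fin.val_inj]
  map_mul' a b := by
    ext i j
    rw [mul_apply (m := Fin (v + 2)), sum_univ_zero_mid_last]
    rcases eq_zero_or_eq_mid_or_eq_last i with rfl | ⟨k, rfl⟩ | rfl <;>
      rcases eq_zero_or_eq_mid_or_eq_last j with rfl | ⟨l, rfl⟩ | rfl <;>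
      simp [mul_apply, Fin.sum_univ_two, Fin.val_inj, mul_ite]

theorem cornerEmbed_diagonal_equivalent (v : ℕ) (a d : R) :
    Equivalent (cornerEmbed v (diagonal ![a, d]))
      (diagonal fun i : Fin (v + 2) =>
        if (i : ℕ) = v + 1 then d else if (i : ℕ) = v then a else 1) := by
  convert Equivalent.diagonal_comp_perm
    (fun i : Fin (v + 2) => if (i : ℕ) = 0 then a else if (i : ℕ) = v + 1 then d else 1)
    (Equiv.swap 0 ⟨v, by omega⟩) using 2
  · ext i j
    rcases eq_zero_or_eq_mid_or_eq_last i with rfl | ⟨k, rfl⟩ | rfl <;>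
      rcases eq_zero_or_eq_mid_or_eq_last j with rfl | ⟨l, rfl⟩ | rfl <;>
      simp [cornerEmbed, diagonal, Fin.val_inj]
  · funext i
    simp only [Function.comp_apply, Equiv.swap_apply_def]
    split_ifs <;> simp_all [Fin.ext_iff, -Fin.val_eq_zero_iff]

end Embedding

section Reduction

/-- Subtract the last row from every middle row, then clear the middle columns of the first and
last rows with the middle rows. -/
def rowOp (v : ℕ) (r : ℤ) : Matrix (Fin (v + 2)) (Fin (v + 2)) ℤ :=
  of fun i j =>
    if (i : ℕ) = 0 then
      (if (j : ℕ) = 0 then 1 else if (j : ℕ) = v + 1 then 2 * r * v else -(2 * r))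
    else if (i : ℕ) = v + 1 then
      (if (j : ℕ) = 0 then 0 else if (j : ℕ) = v + 1 then 1 + r * v else -r)
    else if (j : ℕ) = v + 1 then -1 else if (i : ℕ) = j then 1 else 0

def rowOpInv (v : ℕ) (r : ℤ) : Matrix (Fin (v + 2)) (Fin (v + 2)) ℤ :=
  of fun i j =>
    if (i : ℕ) = 0 then (if (j : ℕ) = 0 then 1 else if (j : ℕ) = v + 1 then 0 else 2 * r)
    else if (i : ℕ) = v + 1 then (if (j : ℕ) = 0 then 0 else if (j : ℕ) = v + 1 then 1 else r)
    else if (j : ℕ) = 0 then 0 else if (j : ℕ) = v + 1 then 1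
    else (if (i : ℕ) = j then 1 else 0) + r

/-- Add every middle column to the last column. -/
def colOp (v : ℕ) : Matrix (Fin (v + 2)) (Fin (v + 2)) ℤ :=
  of fun i j => if (i : ℕ) = j then 1 else if (j : ℕ) = v + 1 ∧ (i : ℕ) ≠ 0 then 1 else 0

def rowReduced (v : ℕ) (r : ℤ) : Matrix (Fin (v + 2)) (Fin (v + 2)) ℤ :=
  of fun i j =>
    if (i : ℕ) = 0 then
      (if (j : ℕ) = 0 then 4 * r else if (j : ℕ) = v + 1 then 2 * (r * (v + 1)) else 0)
    else if (i : ℕ) = v + 1 then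
      (if (j : ℕ) = 0 then 2 * r else if (j : ℕ) = v + 1 then 1 + r * (v + 1) else 0)
    else if (j : ℕ) = v + 1 then -1 else if (i : ℕ) = j then 1 else 0

theorem rowOp_mul_rowOpInv (v : ℕ) (r : ℤ) : rowOp v r * rowOpInv v r = 1 := by
  ext i j
  rw [mul_apply, sum_univ_zero_mid_last]
  rcases eq_zero_or_eq_mid_or_eq_last i with rfl | ⟨k, rfl⟩ | rfl <;>
    rcases eq_zero_or_eq_mid_or_eq_last j with rfl | ⟨l, rfl⟩ | rfl <;>
    simp [rowOp, rowOpInv, one_apply, Fin.val_inj, Finset.sum_add_distrib, mul_add, mul_ite,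
      ite_mul] <;>
    ring

theorem det_colOp (v : ℕ) : (colOp v).det = 1 := by
  rw [det_of_isUpperTriangular]
  · simp [colOp]
  · intro i j (hji : (j : ℕ) < i)
    have hj : (j : ℕ) ≠ v + 1 := by omega
    simp [colOp, hji.ne', hj]

theorem rowOp_mul_cartanGam (v r : ℕ) : rowOp v r * cartanGam (v + 1) r = rowReduced v r := by
  ext i j
  rw [mul_apply, sum_univ_zero_mid_last]
  rcases eq_zero_or_eq_mid_or_eq_last i with rfl | ⟨k, rfl⟩ | rfl <;>
    rcases eq_zero_or_eq_mid_or_eq_last j with rfl | ⟨l, rfl⟩ | rfl <;>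
    simp [rowOp, rowReduced, cartanGam, Fin.val_inj, Finset.sum_add_distrib, mul_add, add_mul,
      mul_ite, ite_mul] <;>
    ring

theorem rowReduced_mul_colOp (v : ℕ) (r : ℤ) :
    rowReduced v r * colOp v = cornerEmbed v (cornerBlock r (v + 1)) := by
  ext i j
  rw [mul_apply, sum_univ_zero_mid_last]
  rcases eq_zero_or_eq_mid_or_eq_last i with rfl | ⟨k, rfl⟩ | rfl <;>
    rcases eq_zero_or_eq_mid_or_eq_last j with rfl | ⟨l, rfl⟩ | rfl <;>
    simp [rowReduced, colOp, cornerEmbed, cornerBlock, Fin.val_inj, mul_ite]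

theorem cartanGam_equivalent_cornerEmbed (v r : ℕ) :
    Equivalent (cartanGam (v + 1) r) (cornerEmbed v (cornerBlock (r : ℤ) (v + 1))) :=
  ⟨rowOp v r, colOp v, isUnit_det_of_right_inverse (rowOp_mul_rowOpInv v r),
    by simp [det_colOp], by rw [rowOp_mul_cartanGam, rowReduced_mul_colOp]⟩

end Reduction

end CartanGam

open CartanGam

theorem stmt7_general (u r : ℕ) :
    (Even (r * u) →
      ∃ U V : Matrix (Fin (u + 1)) (Fin (u + 1)) ℤ, IsUnit U.det ∧ IsUnit V.det ∧
        U * cartanGam u r * V =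
          Matrix.diagonal (fun i : Fin (u + 1) => if (i : ℕ) = u then 4 * (r : ℤ) else 1)) ∧
    (Odd (r * u) →
      ∃ U V : Matrix (Fin (u + 1)) (Fin (u + 1)) ℤ, IsUnit U.det ∧ IsUnit V.det ∧
        U * cartanGam u r * V =
          Matrix.diagonal (fun i : Fin (u + 1) =>
            if (i : ℕ) = u then 2 * (r : ℤ) else if (i : ℕ) = u - 1 then 2 else 1)) := by
  cases u with
  | zero =>
    refine ⟨fun _ => ⟨1, 1, by simp, by simp, ?_⟩, fun hodd => absurd hodd (by simp)⟩
    ext i j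
    fin_cases i; fin_cases j
    simp [cartanGam]
  | succ v =>
    have reduce (a d : ℤ) (hB : Equivalent (cornerBlock (r : ℤ) (v + 1)) (diagonal ![a, d])) :
        Equivalent (cartanGam (v + 1) r) (diagonal fun i : Fin (v + 2) =>
          if (i : ℕ) = v + 1 then d else if (i : ℕ) = v then a else 1) :=
      ((cartanGam_equivalent_cornerEmbed v r).trans (hB.map (cornerEmbed v))).trans
        (cornerEmbed_diagonal_equivalent v a d)
    refine ⟨fun heven => ?_, fun hodd => ?_⟩
    · have hC := reduce 1 (4 * r) (cornerBlock_equivalent_of_even (by exact_mod_cast heven))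
      simp only [ite_self] at hC
      exact hC
    · exact reduce 2 (2 * r) (cornerBlock_equivalent_of_odd (by exact_mod_cast hodd))

/-- If `r·u` is even the Smith normal form of the Cartan matrix of `Γ` is `diag(1,…,1,4r)`;
if `r·u` is odd it is `diag(1,…,1,2,2r)`. -/
theorem stmt7 (u r : ℕ) (hr : 1 ≤ r) :
    (Even (r * u) →
      ∃ U V : Matrix (Fin (u + 1)) (Fin (u + 1)) ℤ, IsUnit U.det ∧ IsUnit V.det ∧
        U * cartanGam u r * V =
          Matrix.diagonal (fun i : Fin (u + 1) => if (i : ℕ) = u then 4 * (r : ℤ) else 1)) ∧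
    (Odd (r * u) →
      ∃ U V : Matrix (Fin (u + 1)) (Fin (u + 1)) ℤ, IsUnit U.det ∧ IsUnit V.det ∧
        U * cartanGam u r * V =
          Matrix.diagonal (fun i : Fin (u + 1) =>
            if (i : ℕ) = u then 2 * (r : ℤ) else if (i : ℕ) = u - 1 then 2 else 1)) :=
  stmt7_general u r
end

section
/- Let p, q, s, t ≥ 1 and let C be the Cartan matrix of Λ(p,q;s,t) (size (p+q−1) with (1,1) entry s+t, border entries t and s, and diagonal blocks I_{p−1}+t·J_{p−1} and I_{q−1}+s·J_{q−1}). Then the Smith normal form of C is diag(1, 1, …, 1, s+t+(p+q−2)st). -/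
open Matrix Finset

namespace Matrix

variable {n R : Type*} [Fintype n] [CommRing R]

theorem dotProduct_boole (P Q : n → Prop) [DecidablePred P] [DecidablePred Q] :
    (fun i => if P i then (1 : R) else 0) ⬝ᵥ (fun i => if Q i then 1 else 0) =
      #{i | P i ∧ Q i} := by
  simp only [dotProduct, ite_zero_mul_ite_zero, mul_one, sum_boole]

theorem submatrix_mul_mul_submatrix (σ : Equiv.Perm n) (U C V : Matrix n n R) :
    U.submatrix σ id * C * V.submatrix id σ = (U * C * V).submatrix σ σ := by
  rw [submatrix_mul _ _ _ _ _ Function.bijective_id,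
    submatrix_mul U C σ id id Function.bijective_id, submatrix_id_id]

theorem det_one_add_vecMulVec [DecidableEq n] (x y : n → R) :
    (1 + vecMulVec x y).det = 1 + y ⬝ᵥ x := by
  rw [vecMulVec_eq Unit, det_one_add_replicateCol_mul_replicateRow]

end Matrix

section CartanForm

variable {n R : Type*} [Fintype n] [DecidableEq n] [CommRing R]

def cartanForm (s t : R) (z a b : n → R) : Matrix n n R :=
  1 - vecMulVec z z + t • vecMulVec (z + a) (z + a) + s • vecMulVec (z + b) (z + b)

theorem exists_det_eq_one_mul_cartanForm_mul (s t : R) {z a b : n → R} (hzz : z ⬝ᵥ z = 1)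
    (hza : z ⬝ᵥ a = 0) (hzb : z ⬝ᵥ b = 0) (hab : a ⬝ᵥ b = 0) :
    ∃ U V : Matrix n n R, U.det = 1 ∧ V.det = 1 ∧
      U * cartanForm s t z a b * V =
        1 + (s + t + (a ⬝ᵥ a + b ⬝ᵥ b) * s * t - 1) • vecMulVec z z := by
  have haz : a ⬝ᵥ z = 0 := by rw [dotProduct_comm, hza]
  have hbz : b ⬝ᵥ z = 0 := by rw [dotProduct_comm, hzb]
  have hba : b ⬝ᵥ a = 0 := by rw [dotProduct_comm, hab]
  refine ⟨(1 + t • vecMulVec z (b - a)) * (1 - vecMulVec a z),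
    (1 - vecMulVec z b) * (1 - s • vecMulVec (b - a) z), ?_, ?_, ?_⟩
  · rw [det_mul, ← smul_vecMulVec, sub_eq_add_neg 1, ← neg_vecMulVec, det_one_add_vecMulVec,
      det_one_add_vecMulVec]
    simp [hza, hbz, haz]
  · rw [det_mul, ← smul_vecMulVec, sub_eq_add_neg 1, sub_eq_add_neg 1, ← vecMulVec_neg,
      ← neg_vecMulVec, det_one_add_vecMulVec, det_one_add_vecMulVec]
    simp [hzb, hbz, hza]
  · simp only [cartanForm, mul_add, add_mul, mul_sub, sub_mul, mul_one, one_mul, mul_smul_comm,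
      smul_mul_assoc, vecMulVec_mul_vecMulVec, add_vecMulVec, vecMulVec_add, vecMulVec_sub,
      sub_vecMulVec, hzz, hza, hzb, hab, haz, hbz, hba, smul_add, smul_sub, vecMulVec_smul]
    module

end CartanForm

namespace CartanLam

variable (p q : ℕ)

def e₀ : Fin (p + q - 1) → ℤ := fun i => if (i : ℕ) = 0 then 1 else 0

def armP : Fin (p + q - 1) → ℤ := fun i => if 0 < (i : ℕ) ∧ (i : ℕ) < p then 1 else 0

def armQ : Fin (p + q - 1) → ℤ := fun i => if 0 < (i : ℕ) ∧ p ≤ (i : ℕ) then 1 else 0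

theorem cartanLam_eq_cartanForm (s t : ℕ) :
    cartanLam p q s t = cartanForm (s : ℤ) t (e₀ p q) (armP p q) (armQ p q) := by
  ext i j
  simp only [cartanLam, cartanForm, e₀, armP, armQ, of_apply, Matrix.add_apply, Matrix.sub_apply,
    Matrix.smul_apply, one_apply, vecMulVec_apply, Pi.add_apply, smul_eq_mul, Fin.ext_iff]
  split_ifs <;> first | ring1 | omega

theorem e₀_dotProduct_e₀ (hn : 0 < p + q - 1) : e₀ p q ⬝ᵥ e₀ p q = 1 := by
  unfold e₀
  rw [dotProduct_boole]
  simp only [and_self, Nat.cast_eq_one, card_eq_one]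
  exact ⟨⟨0, hn⟩, by ext; simp [Fin.ext_iff]⟩

theorem e₀_dotProduct_armP : e₀ p q ⬝ᵥ armP p q = 0 := by
  unfold e₀ armP
  rw [dotProduct_boole, Nat.cast_eq_zero, card_eq_zero, filter_eq_empty_iff]
  intro i _; omega

theorem e₀_dotProduct_armQ : e₀ p q ⬝ᵥ armQ p q = 0 := by
  unfold e₀ armQ
  rw [dotProduct_boole, Nat.cast_eq_zero, card_eq_zero, filter_eq_empty_iff]
  intro i _; omega

theorem armP_dotProduct_armQ : armP p q ⬝ᵥ armQ p q = 0 := by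
  unfold armP armQ
  rw [dotProduct_boole, Nat.cast_eq_zero, card_eq_zero, filter_eq_empty_iff]
  intro i _; omega

theorem armP_dotProduct_armP_add_armQ_dotProduct_armQ (hn : 0 < p + q - 1) :
    armP p q ⬝ᵥ armP p q + armQ p q ⬝ᵥ armQ p q = ((p + q - 2 : ℕ) : ℤ) := by
  unfold armP armQ
  rw [dotProduct_boole, dotProduct_boole, ← Nat.cast_add]
  simp only [and_self]
  have hsplit := card_filter_add_card_filter_not
    (s := {i : Fin (p + q - 1) | 0 < (i : ℕ)}) (fun i => (i : ℕ) < p)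
  have hpos : ({i | 0 < (i : ℕ)} : Finset (Fin (p + q - 1))) = univ.erase ⟨0, hn⟩ := by
    ext i; simp [Fin.ext_iff, Nat.pos_iff_ne_zero]
  simp only [filter_filter, not_lt] at hsplit
  rw [hsplit, hpos, card_erase_of_mem (mem_univ _), card_univ, Fintype.card_fin]
  omega

theorem one_add_smul_vecMulVec_e₀ (c : ℤ) :
    (1 : Matrix (Fin (p + q - 1)) (Fin (p + q - 1)) ℤ) + c • vecMulVec (e₀ p q) (e₀ p q) =
      diagonal fun i : Fin (p + q - 1) => if (i : ℕ) = 0 then 1 + c else 1 := by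
  ext i j
  simp only [e₀, Matrix.add_apply, Matrix.smul_apply, one_apply, vecMulVec_apply, diagonal_apply,
    smul_eq_mul, Fin.ext_iff]
  split_ifs <;> first | ring1 | omega

end CartanLam

open CartanLam

theorem stmt8_general (p q s t : ℕ) :
    ∃ U V : Matrix (Fin (p + q - 1)) (Fin (p + q - 1)) ℤ, IsUnit U.det ∧ IsUnit V.det ∧
      U * cartanLam p q s t * V =
        Matrix.diagonal (fun i : Fin (p + q - 1) =>
          if (i : ℕ) = p + q - 2 then (s : ℤ) + t + ((p + q - 2 : ℕ) : ℤ) * s * t else 1) := by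
  rcases Nat.eq_zero_or_pos (p + q - 1) with hn | hn
  · exact ⟨1, 1, by simp, by simp, by ext i; exact absurd i.2 (by omega)⟩
  obtain ⟨U, V, hU, hV, hUCV⟩ := exists_det_eq_one_mul_cartanForm_mul (s : ℤ) t
    (e₀_dotProduct_e₀ p q hn) (e₀_dotProduct_armP p q) (e₀_dotProduct_armQ p q)
    (armP_dotProduct_armQ p q)
  let σ := Equiv.swap (⟨0, hn⟩ : Fin (p + q - 1)) ⟨p + q - 2, by omega⟩
  refine ⟨U.submatrix σ id, V.submatrix id σ, by simp [det_permute, hU],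
    by simp [det_permute', hV], ?_⟩
  rw [submatrix_mul_mul_submatrix, cartanLam_eq_cartanForm, hUCV,
    armP_dotProduct_armP_add_armQ_dotProduct_armQ p q hn, one_add_smul_vecMulVec_e₀,
    submatrix_diagonal_equiv]
  have hσ (i : Fin (p + q - 1)) : (σ i : ℕ) = 0 ↔ (i : ℕ) = p + q - 2 := by
    rw [← Fin.val_mk hn, ← Fin.ext_iff, Equiv.swap_apply_eq_iff, Equiv.swap_apply_left,
      Fin.ext_iff]
  congr 1; ext i
  simp only [Function.comp_apply, hσ]
  split_ifs <;> ring

/-- The Smith normal form of the Cartan matrix of `Λ(p,q;s,t)` is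
`diag(1, …, 1, s+t+(p+q-2)st)`. -/
theorem stmt8 (p q s t : ℕ) (hp : 1 ≤ p) (hq : 1 ≤ q) (hs : 1 ≤ s) (ht : 1 ≤ t) :
    ∃ U V : Matrix (Fin (p + q - 1)) (Fin (p + q - 1)) ℤ, IsUnit U.det ∧ IsUnit V.det ∧
      U * cartanLam p q s t * V =
        Matrix.diagonal (fun i : Fin (p + q - 1) =>
          if (i : ℕ) = p + q - 2 then (s : ℤ) + t + ((p + q - 2 : ℕ) : ℤ) * s * t else 1) :=
  stmt8_general p q s t
end

section
/- Let A be an indecomposable finite-dimensional symmetric K-algebra given as KQ/I with I admissible, such that A is special biserial and A is not isomorphic to K[X]/(X²). Then for every arrow a of Q there exists a unique arrow a' with a'a ≠ 0 in A, and a unique arrow a'' with a·a'' ≠ 0 in A. -/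
/-!
Write `J` for the radical. Since `J = span X + J²` with `J` nilpotent, the arrows generate `J` as a
right and as a left ideal, so an arrow without successor satisfies `X a * J = 0` and one without
predecessor `J * X a = 0`; for a symmetric form these two conditions are equivalent. Suppose
`X a * J = 0 = J * X a` and let `v = src a`. Then `f (X a) ≠ 0`, so `a` is a loop, and every
`t ∈ e v A` with `J * t = 0` is a multiple of `X a`. For another arrow `b` out of `v`, the right
ideal `X b A` contains such a `t ≠ 0` (as `J` is nilpotent), so `X a ∈ K X b + J²`, against
admissibility. Hence `e v J = K X a`, so `e v A e w = 0` for `w ≠ v`, and by symmetry also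
`e w A e v = 0`: the idempotent `e v` is central, hence equal to `1`, and `A = K ⊕ K X a` with
`(X a)² = 0`, i.e. `A ≅ K[X]/(X²)`.
-/

section NilpotentIdeal

variable {K A : Type*} [CommRing K] [Ring A] [Algebra K A]

variable (K) in
def Ideal.sqSpan (I : Ideal A) : Submodule K A :=
  Submodule.span K {z | ∃ x ∈ I, ∃ y ∈ I, z = x * y}

variable {I : Ideal A}

theorem Ideal.restrictScalars_le_of_le_sup_sqSpan_of_mul_mem_right (hI : IsNilpotent I)
    {T : Submodule K A} (hT : ∀ t ∈ T, ∀ x ∈ I, t * x ∈ T)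
    (hle : I.restrictScalars K ≤ T ⊔ I.sqSpan K) :
    I.restrictScalars K ≤ T := by
  obtain ⟨n, hn⟩ := hI
  suffices h : ∀ k, I.restrictScalars K ≤ T ⊔ (I ^ (k + 1)).restrictScalars K by
    simpa [Submodule.pow_succ, hn] using h n
  intro k
  induction k with
  | zero => simp [Submodule.pow_one]
  | succ k ih =>
    refine hle.trans (sup_le le_sup_left (Submodule.span_le.2 ?_))
    rintro _ ⟨x, hx, y, hy, rfl⟩
    obtain ⟨t, ht, r, hr, rfl⟩ := Submodule.mem_sup.1 (ih hx)
    rw [add_mul, Submodule.pow_succ]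
    exact add_mem (Submodule.mem_sup_left (hT t ht y hy))
      (Submodule.mem_sup_right (Ideal.mul_mem_mul hr hy))

theorem Ideal.restrictScalars_le_of_le_sup_sqSpan_of_mul_mem_left (hI : IsNilpotent I)
    {T : Submodule K A} (hT : ∀ t ∈ T, ∀ x ∈ I, x * t ∈ T)
    (hle : I.restrictScalars K ≤ T ⊔ I.sqSpan K) :
    I.restrictScalars K ≤ T := by
  obtain ⟨n, hn⟩ := hI
  suffices h : ∀ k, I.restrictScalars K ≤ T ⊔ (I ^ (k + 1)).restrictScalars K by
    simpa [Submodule.pow_succ, hn] using h n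
  intro k
  induction k with
  | zero => simp [Submodule.pow_one]
  | succ k ih =>
    refine hle.trans (sup_le le_sup_left (Submodule.span_le.2 ?_))
    rintro _ ⟨x, hx, y, hy, rfl⟩
    obtain ⟨t, ht, r, hr, rfl⟩ := Submodule.mem_sup.1 (ih hy)
    rw [mul_add, Submodule.pow_succ' _ k.succ_ne_zero]
    exact add_mem (Submodule.mem_sup_left (hT t ht x hx))
      (Submodule.mem_sup_right (Ideal.mul_mem_mul hx hr))

end NilpotentIdeal

theorem Ideal.exists_mul_ne_zero_forall_mul_mem_eq_zero {A : Type*} [Ring A] {I : Ideal A}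
    (hI : IsNilpotent I) {x : A} (hx : x ≠ 0) : ∃ u, x * u ≠ 0 ∧ ∀ j ∈ I, x * u * j = 0 := by
  classical
  have hP : ∃ k, ∀ u ∈ I ^ k, x * u = 0 := by
    obtain ⟨n, hn⟩ := hI
    exact ⟨n, by simp [hn]⟩
  obtain ⟨m, hm⟩ : ∃ m, Nat.find hP = m + 1 := by
    refine Nat.exists_eq_succ_of_ne_zero fun h0 => hx ?_
    rw [← mul_one x]
    exact (h0 ▸ Nat.find_spec hP) 1 (by simp [Submodule.pow_zero])
  obtain ⟨u, hu, hxu⟩ : ∃ u ∈ I ^ m, x * u ≠ 0 := by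
    simpa using Nat.find_min hP (show m < Nat.find hP by omega)
  refine ⟨u, hxu, fun j hj => ?_⟩
  rw [mul_assoc]
  exact Nat.find_spec hP _ (hm ▸ Submodule.pow_succ (M := I) ▸ Ideal.mul_mem_mul hu hj)

section SymmetricForm

variable {K A : Type*} [CommRing K] [Ring A] [Algebra K A] {f : A →ₗ[K] K}

theorem forall_mul_eq_zero_iff_of_symm (hfsym : ∀ x y : A, f (x * y) = f (y * x))
    (hfL : ∀ x : A, (∀ y, f (y * x) = 0) → x = 0) (I : Ideal A) [I.IsTwoSided] (s : A) :
    (∀ j ∈ I, s * j = 0) ↔ ∀ j ∈ I, j * s = 0 := by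
  constructor
  · intro h j hj
    refine hfL _ fun y => ?_
    rw [← mul_assoc, hfsym, h _ (I.mul_mem_left y hj), map_zero]
  · intro h j hj
    refine hfL _ fun y => ?_
    rw [← mul_assoc, hfsym, ← mul_assoc, h _ (I.mul_mem_right y hj), map_zero]

theorem mul_mul_eq_zero_of_symm (hfsym : ∀ x y : A, f (x * y) = f (y * x))
    (hfL : ∀ x : A, (∀ y, f (y * x) = 0) → x = 0) {p q : A} (h : ∀ y, p * y * q = 0) (y : A) :
    q * y * p = 0 :=
  hfL _ fun x => by
    rw [← mul_assoc, ← mul_assoc, hfsym, show p * (x * q * y) = p * x * q * y by noncomm_ring, h,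
      zero_mul, map_zero]

end SymmetricForm

open Polynomial in
theorem nonempty_algEquiv_quotient_span_X_sq {K A : Type*} [Field K] [Ring A] [Algebra K A]
    {x : A} (hx0 : x ≠ 0) (hx : x * x = 0) (hspan : ∀ y : A, ∃ α β : K, y = α • 1 + β • x) :
    Nonempty (A ≃ₐ[K] K[X] ⧸ Ideal.span {(X : K[X]) ^ 2}) := by
  have hindep (α β : K) (h : α • (1 : A) + β • x = 0) : α = 0 ∧ β = 0 := by
    have hα : α = 0 := by
      refine (smul_eq_zero.1 ?_).resolve_right hx0
      simpa [add_mul, smul_mul_assoc, hx] using congrArg (· * x) h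
    exact ⟨hα, (smul_eq_zero.1 (by simpa [hα] using h)).resolve_right hx0⟩
  have haeval (p : K[X]) : aeval x p = p.coeff 0 • 1 + p.coeff 1 • x := by
    obtain ⟨q, hq⟩ : X ^ 2 ∣ p - (C (p.coeff 0) + C (p.coeff 1) * X) :=
      X_pow_dvd_iff.2 fun d hd => by interval_cases d <;> simp
    have := congrArg (aeval x) (sub_eq_iff_eq_add'.1 hq)
    simpa [pow_two, hx, Algebra.smul_def] using this
  have hsurj : Function.Surjective (aeval (R := K) x) := fun y => by
    obtain ⟨α, β, rfl⟩ := hspan y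
    exact ⟨C α + C β * X, by simp [haeval]⟩
  have hker : RingHom.ker (aeval (R := K) x) = Ideal.span {X ^ 2} := by
    ext p
    rw [RingHom.mem_ker, Ideal.mem_span_singleton, X_pow_dvd_iff, haeval]
    constructor
    · intro h d hd
      interval_cases d
      exacts [(hindep _ _ h).1, (hindep _ _ h).2]
    · intro h
      simp [h 0 two_pos, h 1 one_lt_two]
  exact ⟨(Ideal.quotientKerAlgEquivOfSurjective hsurj).symm.trans
    (Ideal.quotientEquivAlgOfEq K hker)⟩

theorem idempotent_mem_center {A V : Type*} [Ring A] [Fintype V] {e : V → A}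
    (hsum : ∑ v, e v = 1) {v : V}
    (h : ∀ w ≠ v, ∀ y, e v * y * e w = 0 ∧ e w * y * e v = 0) : e v ∈ Set.center A := by
  classical
  refine Semigroup.mem_center_iff.2 fun y => ?_
  have hl : y * e v = e v * y * e v := by
    conv_lhs => rw [← one_mul y, ← hsum]
    rw [Finset.sum_mul, Finset.sum_mul,
      Finset.sum_eq_single v (fun w _ hw => (h w hw y).2) (by simp)]
  have hr : e v * y = e v * y * e v := by
    conv_lhs => rw [← mul_one (e v * y), ← hsum]
    rw [Finset.mul_sum, Finset.sum_eq_single v (fun w _ hw => (h w hw y).1) (by simp)]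
  exact hl.trans hr.symm

section Presentation

variable {K A V E : Type*} [CommRing K] [Ring A] [Algebra K A]
  {src tgt : E → V} {e : V → A} {X : E → A}

theorem sum_smul_mul_of_mul_eq [Fintype V] [DecidableEq V]
    (horth : ∀ v w, e v * e w = if v = w then e v else 0) (c : V → K) {v : V} {s : A}
    (hs : e v * s = s) : (∑ w, c w • e w) * s = c v • s := by
  rw [← hs]
  simp [Finset.sum_mul, ← mul_assoc, horth]

theorem mul_sum_smul_of_mul_eq [Fintype V] [DecidableEq V]
    (horth : ∀ v w, e v * e w = if v = w then e v else 0) (c : V → K) {v : V} {s : A}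
    (hs : s * e v = s) : s * (∑ w, c w • e w) = c v • s := by
  rw [← hs]
  simp [Finset.mul_sum, mul_assoc, horth]

theorem exists_eq_sum_smul_add_mem_jacobson [Fintype V] [DecidableEq V]
    (horth : ∀ v w, e v * e w = if v = w then e v else 0) (hsum : ∑ v, e v = 1)
    (hgen : Algebra.adjoin K (Set.range e ∪ Set.range X) = ⊤)
    (hrad : ∀ a, X a ∈ Ring.jacobson A) (y : A) :
    ∃ c : V → K, ∃ j ∈ Ring.jacobson A, y = ∑ v, c v • e v + j := by
  set S := Submodule.span K (Set.range e)
  have hS_mul : ∀ x ∈ S, ∀ y ∈ S, x * y ∈ S := by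
    intro x hx y hy
    obtain ⟨c, rfl⟩ := (Submodule.mem_span_range_iff_exists_fun K).1 hx
    obtain ⟨d, rfl⟩ := (Submodule.mem_span_range_iff_exists_fun K).1 hy
    rw [Finset.mul_sum]
    exact Submodule.sum_mem _ fun w _ => by
      rw [mul_smul_comm, sum_smul_mul_of_mul_eq horth c (v := w) (by simp [horth])]
      exact S.smul_mem _ (S.smul_mem _ (Submodule.subset_span ⟨w, rfl⟩))
  have hS_one : (1 : A) ∈ S :=
    hsum ▸ Submodule.sum_mem _ fun v _ => Submodule.subset_span ⟨v, rfl⟩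
  have hy : y ∈ S ⊔ (Ring.jacobson A).restrictScalars K := by
    have hy : y ∈ Algebra.adjoin K (Set.range e ∪ Set.range X) := hgen ▸ Algebra.mem_top
    induction hy using Algebra.adjoin_induction with
    | mem x hx =>
      rcases hx with ⟨v, rfl⟩ | ⟨a, rfl⟩
      exacts [Submodule.mem_sup_left (Submodule.subset_span ⟨v, rfl⟩),
        Submodule.mem_sup_right (hrad a)]
    | algebraMap r =>
      rw [Algebra.algebraMap_eq_smul_one]
      exact Submodule.mem_sup_left (S.smul_mem r hS_one)
    | add x y _ _ hx hy => exact add_mem hx hy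
    | mul x y _ _ hx hy =>
      obtain ⟨s, hs, j, hj, rfl⟩ := Submodule.mem_sup.1 hx
      obtain ⟨t, ht, k, hk, rfl⟩ := Submodule.mem_sup.1 hy
      rw [add_mul, mul_add, add_assoc]
      refine add_mem (Submodule.mem_sup_left (hS_mul s hs t ht)) (Submodule.mem_sup_right ?_)
      exact add_mem (Ideal.mul_mem_left _ _ hk) (Ideal.mul_mem_right _ _ hj)
  obtain ⟨s, hs, j, hj, rfl⟩ := Submodule.mem_sup.1 hy
  obtain ⟨c, rfl⟩ := (Submodule.mem_span_range_iff_exists_fun K).1 hs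
  exact ⟨c, j, hj, rfl⟩

theorem exists_eq_sum_arrow_mul [Fintype E] (hJ : IsNilpotent (Ring.jacobson A))
    (hradgen : Submodule.span K (Set.range X) ⊔ (Ring.jacobson A).sqSpan K =
      (Ring.jacobson A).restrictScalars K)
    {j : A} (hj : j ∈ Ring.jacobson A) : ∃ y : E → A, j = ∑ b, X b * y b := by
  classical
  let T := LinearMap.range (LinearMap.lsum K (fun _ : E => A) K fun b => LinearMap.mulLeft K (X b))
  have hXT : Submodule.span K (Set.range X) ≤ T := Submodule.span_le.2 <| by
    rintro _ ⟨b, rfl⟩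
    exact ⟨Pi.single b 1, by simp [Pi.single_apply]⟩
  have hT : ∀ t ∈ T, ∀ x ∈ Ring.jacobson A, t * x ∈ T := by
    rintro _ ⟨y, rfl⟩ x -
    exact ⟨fun b => y b * x, by simp [Finset.sum_mul, mul_assoc]⟩
  obtain ⟨y, hy⟩ := (Ideal.restrictScalars_le_of_le_sup_sqSpan_of_mul_mem_right hJ hT
    (hradgen.ge.trans (sup_le_sup_right hXT _))) hj
  exact ⟨y, by simpa using hy.symm⟩

theorem exists_eq_sum_mul_arrow [Fintype E] (hJ : IsNilpotent (Ring.jacobson A))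
    (hradgen : Submodule.span K (Set.range X) ⊔ (Ring.jacobson A).sqSpan K =
      (Ring.jacobson A).restrictScalars K)
    {j : A} (hj : j ∈ Ring.jacobson A) : ∃ y : E → A, j = ∑ b, y b * X b := by
  classical
  let T := LinearMap.range (LinearMap.lsum K (fun _ : E => A) K fun b => LinearMap.mulRight K (X b))
  have hXT : Submodule.span K (Set.range X) ≤ T := Submodule.span_le.2 <| by
    rintro _ ⟨b, rfl⟩
    exact ⟨Pi.single b 1, by simp [Pi.single_apply]⟩
  have hT : ∀ t ∈ T, ∀ x ∈ Ring.jacobson A, x * t ∈ T := by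
    rintro _ ⟨y, rfl⟩ x -
    exact ⟨fun b => x * y b, by simp [Finset.mul_sum, mul_assoc]⟩
  obtain ⟨y, hy⟩ := (Ideal.restrictScalars_le_of_le_sup_sqSpan_of_mul_mem_left hJ hT
    (hradgen.ge.trans (sup_le_sup_right hXT _))) hj
  exact ⟨y, by simpa using hy.symm⟩

theorem arrow_mul_eq_zero_of_forall [Fintype E] (hJ : IsNilpotent (Ring.jacobson A))
    (hradgen : Submodule.span K (Set.range X) ⊔ (Ring.jacobson A).sqSpan K =
      (Ring.jacobson A).restrictScalars K)
    {a : E} (h : ∀ b, X a * X b = 0) : ∀ j ∈ Ring.jacobson A, X a * j = 0 := by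
  intro j hj
  obtain ⟨y, rfl⟩ := exists_eq_sum_arrow_mul hJ hradgen hj
  simp [Finset.mul_sum, ← mul_assoc, h]

theorem mul_arrow_eq_zero_of_forall [Fintype E] (hJ : IsNilpotent (Ring.jacobson A))
    (hradgen : Submodule.span K (Set.range X) ⊔ (Ring.jacobson A).sqSpan K =
      (Ring.jacobson A).restrictScalars K)
    {a : E} (h : ∀ b, X b * X a = 0) : ∀ j ∈ Ring.jacobson A, j * X a = 0 := by
  intro j hj
  obtain ⟨y, rfl⟩ := exists_eq_sum_mul_arrow hJ hradgen hj
  simp [Finset.sum_mul, mul_assoc, h]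

theorem arrow_ne_zero [Nontrivial K] [Fintype E]
    (hadm : ∀ c : E → K, (∑ a, c a • X a) ∈ (Ring.jacobson A).sqSpan K → c = 0) (a : E) :
    X a ≠ 0 := by
  classical
  intro ha
  have := congrFun (hadm (Pi.single a 1) (by simp [Pi.single_apply, ha])) a
  simp at this

theorem eq_of_arrow_sub_smul_mem [Nontrivial K] [Fintype E]
    (hadm : ∀ c : E → K, (∑ a, c a • X a) ∈ (Ring.jacobson A).sqSpan K → c = 0) {a b : E} {r : K}
    (h : X a - r • X b ∈ (Ring.jacobson A).sqSpan K) : a = b := by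
  classical
  by_contra hab
  have := congrFun (hadm (Pi.single a 1 - Pi.single b r) (by
    simpa [sub_smul, Finset.sum_sub_distrib, Pi.single_apply] using h)) a
  simp [hab] at this

theorem mul_mem_span_singleton_of_mul_eq [Fintype V] [DecidableEq V]
    (horth : ∀ v w, e v * e w = if v = w then e v else 0)
    (hdec : ∀ y : A, ∃ c : V → K, ∃ j ∈ Ring.jacobson A, y = ∑ v, c v • e v + j)
    {v : V} {s : A} (hs : s * e v = s) (hsJ : ∀ j ∈ Ring.jacobson A, s * j = 0) (y : A) :
    s * y ∈ K ∙ s := by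
  obtain ⟨c, j, hj, rfl⟩ := hdec y
  rw [mul_add, hsJ j hj, add_zero, mul_sum_smul_of_mul_eq horth c hs]
  exact Submodule.smul_mem _ _ (Submodule.mem_span_singleton_self s)

variable {f : A →ₗ[K] K}

theorem apply_ne_zero_of_mul_eq [Fintype V] [DecidableEq V]
    (horth : ∀ v w, e v * e w = if v = w then e v else 0)
    (hdec : ∀ y : A, ∃ c : V → K, ∃ j ∈ Ring.jacobson A, y = ∑ v, c v • e v + j)
    (hfsym : ∀ x y : A, f (x * y) = f (y * x)) (hfL : ∀ x : A, (∀ y, f (y * x) = 0) → x = 0)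
    {v : V} {s : A} (hs : s * e v = s) (hsJ : ∀ j ∈ Ring.jacobson A, s * j = 0) (hs0 : s ≠ 0) :
    f s ≠ 0 := fun h0 => hs0 <| hfL _ fun y => by
  obtain ⟨r, hr⟩ :=
    Submodule.mem_span_singleton.1 (mul_mem_span_singleton_of_mul_eq horth hdec hs hsJ y)
  rw [hfsym, ← hr, map_smul, h0, smul_zero]

theorem eq_of_apply_ne_zero [DecidableEq V]
    (horth : ∀ v w, e v * e w = if v = w then e v else 0)
    (hfsym : ∀ x y : A, f (x * y) = f (y * x)) {v w : V} {s : A} (hl : e v * s = s)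
    (hr : s * e w = s) (hf : f s ≠ 0) : v = w := by
  by_contra hvw
  apply hf
  rw [← hr, ← hl, hfsym, ← mul_assoc, horth, if_neg (Ne.symm hvw), zero_mul, map_zero]

theorem idempotent_mul_mem_span_singleton [Fintype E] [DecidableEq V]
    (horth : ∀ v w, e v * e w = if v = w then e v else 0)
    (harr : ∀ a, e (src a) * X a = X a ∧ X a * e (tgt a) = X a)
    (hJ : IsNilpotent (Ring.jacobson A))
    (hradgen : Submodule.span K (Set.range X) ⊔ (Ring.jacobson A).sqSpan K =
      (Ring.jacobson A).restrictScalars K)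
    {a : E} (honly : ∀ b, src b = src a → b = a) (hXa : ∀ y, X a * y ∈ K ∙ X a)
    {j : A} (hj : j ∈ Ring.jacobson A) : e (src a) * j ∈ K ∙ X a := by
  obtain ⟨y, rfl⟩ := exists_eq_sum_arrow_mul hJ hradgen hj
  rw [Finset.mul_sum, Finset.sum_eq_single a]
  · rw [← mul_assoc, (harr a).1]
    exact hXa (y a)
  · intro b _ hba
    rw [← mul_assoc, ← (harr b).1, ← mul_assoc, horth,
      if_neg fun h => hba (honly b h.symm), zero_mul, zero_mul]
  · simp

theorem idempotent_mul_mul_idempotent_eq_zero [Fintype V] [DecidableEq V]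
    (horth : ∀ v w, e v * e w = if v = w then e v else 0)
    (hdec : ∀ y : A, ∃ c : V → K, ∃ j ∈ Ring.jacobson A, y = ∑ v, c v • e v + j)
    {v w : V} (hvw : v ≠ w) {s : A} (hvJ : ∀ j ∈ Ring.jacobson A, e v * j ∈ K ∙ s)
    (hs : s * e w = 0) (y : A) : e v * y * e w = 0 := by
  obtain ⟨c, j, hj, rfl⟩ := hdec y
  obtain ⟨r, hr⟩ := Submodule.mem_span_singleton.1 (hvJ j hj)
  rw [mul_add, add_mul, mul_assoc, sum_smul_mul_of_mul_eq horth c (by rw [horth, if_pos rfl]),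
    mul_smul_comm, horth, if_neg hvw, smul_zero, zero_add, ← hr, smul_mul_assoc, hs, smul_zero]

end Presentation

section PresentationOverField

variable {K A V E : Type*} [Field K] [Ring A] [Algebra K A]
  {src tgt : E → V} {e : V → A} {X : E → A} {f : A →ₗ[K] K}

theorem mem_span_singleton_of_jacobson_mul_eq_zero [Fintype V] [DecidableEq V]
    (horth : ∀ v w, e v * e w = if v = w then e v else 0)
    (hdec : ∀ y : A, ∃ c : V → K, ∃ j ∈ Ring.jacobson A, y = ∑ v, c v • e v + j)
    (hfL : ∀ x : A, (∀ y, f (y * x) = 0) → x = 0) {v : V} {s t : A}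
    (hs : e v * s = s) (ht : e v * t = t) (hJs : ∀ j ∈ Ring.jacobson A, j * s = 0)
    (hJt : ∀ j ∈ Ring.jacobson A, j * t = 0) (hfs : f s ≠ 0) : t ∈ K ∙ s := by
  suffices h : f s • t = f t • s from
    Submodule.mem_span_singleton.2 ⟨(f s)⁻¹ * f t, by rw [mul_smul, ← h, inv_smul_smul₀ hfs]⟩
  refine sub_eq_zero.1 (hfL _ fun y => ?_)
  obtain ⟨c, j, hj, rfl⟩ := hdec y
  have hmul {u : A} (hu : e v * u = u) (hJu : ∀ j ∈ Ring.jacobson A, j * u = 0) :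
      (∑ w, c w • e w + j) * u = c v • u := by
    rw [add_mul, hJu j hj, add_zero, sum_smul_mul_of_mul_eq horth c hu]
  rw [mul_sub, mul_smul_comm, mul_smul_comm, hmul hs hJs, hmul ht hJt]
  simp only [map_sub, map_smul, smul_eq_mul]
  ring

theorem eq_of_src_eq_of_arrow_mul_eq_zero [Fintype V] [Fintype E] [DecidableEq V]
    (horth : ∀ v w, e v * e w = if v = w then e v else 0)
    (harr : ∀ a, e (src a) * X a = X a ∧ X a * e (tgt a) = X a)
    (hdec : ∀ y : A, ∃ c : V → K, ∃ j ∈ Ring.jacobson A, y = ∑ v, c v • e v + j)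
    (hrad : ∀ a, X a ∈ Ring.jacobson A)
    (hadm : ∀ c : E → K, (∑ a, c a • X a) ∈ (Ring.jacobson A).sqSpan K → c = 0)
    (hJ : IsNilpotent (Ring.jacobson A))
    (hfsym : ∀ x y : A, f (x * y) = f (y * x)) (hfL : ∀ x : A, (∀ y, f (y * x) = 0) → x = 0)
    {a b : E} (ha : ∀ j ∈ Ring.jacobson A, X a * j = 0) (hab : src b = src a) : b = a := by
  obtain ⟨u, hu0, huJ⟩ := Ideal.exists_mul_ne_zero_forall_mul_mem_eq_zero hJ (arrow_ne_zero hadm b)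
  have hfXa := apply_ne_zero_of_mul_eq horth hdec hfsym hfL (harr a).2 ha (arrow_ne_zero hadm a)
  obtain ⟨r, hr⟩ := Submodule.mem_span_singleton.1 <|
    mem_span_singleton_of_jacobson_mul_eq_zero horth hdec hfL (harr a).1
      (by rw [← mul_assoc, ← hab, (harr b).1])
      ((forall_mul_eq_zero_iff_of_symm hfsym hfL _ _).1 ha)
      ((forall_mul_eq_zero_iff_of_symm hfsym hfL _ _).1 huJ) hfXa
  have hr0 : r ≠ 0 := by
    rintro rfl
    exact hu0 (by rw [← hr, zero_smul])
  obtain ⟨c, j, hj, rfl⟩ := hdec u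
  have hXa : X a = r⁻¹ • (c (tgt b) • X b + X b * j) := by
    rw [← mul_sum_smul_of_mul_eq horth c (harr b).2, ← mul_add, ← hr, inv_smul_smul₀ hr0]
  refine (eq_of_arrow_sub_smul_mem hadm (r := r⁻¹ * c (tgt b)) ?_).symm
  rw [hXa, smul_add, smul_smul, add_sub_cancel_left]
  exact Submodule.smul_mem _ _ (Submodule.subset_span ⟨X b, hrad b, j, hj, rfl⟩)

theorem exists_arrow_mul_ne_zero [Fintype V] [Fintype E] [DecidableEq V]
    (horth : ∀ v w, e v * e w = if v = w then e v else 0) (hne : ∀ v, e v ≠ 0)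
    (hsum : ∑ v, e v = 1) (harr : ∀ a, e (src a) * X a = X a ∧ X a * e (tgt a) = X a)
    (hdec : ∀ y : A, ∃ c : V → K, ∃ j ∈ Ring.jacobson A, y = ∑ v, c v • e v + j)
    (hrad : ∀ a, X a ∈ Ring.jacobson A)
    (hadm : ∀ c : E → K, (∑ a, c a • X a) ∈ (Ring.jacobson A).sqSpan K → c = 0)
    (hradgen : Submodule.span K (Set.range X) ⊔ (Ring.jacobson A).sqSpan K =
      (Ring.jacobson A).restrictScalars K)
    (hJ : IsNilpotent (Ring.jacobson A))
    (hfsym : ∀ x y : A, f (x * y) = f (y * x)) (hfL : ∀ x : A, (∀ y, f (y * x) = 0) → x = 0)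
    (hind : ∀ z : A, z ∈ Set.center A → z * z = z → z = 0 ∨ z = 1)
    (hnot : ¬ Nonempty (A ≃ₐ[K]
      (Polynomial K ⧸ Ideal.span {(Polynomial.X : Polynomial K) ^ 2})))
    (a : E) : ∃ j ∈ Ring.jacobson A, X a * j ≠ 0 := by
  by_contra! ha
  have hidem (v : V) : e v * e v = e v := by rw [horth, if_pos rfl]
  have hloop : src a = tgt a := eq_of_apply_ne_zero horth hfsym (harr a).1 (harr a).2
    (apply_ne_zero_of_mul_eq horth hdec hfsym hfL (harr a).2 ha (arrow_ne_zero hadm a))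
  have hvJ : ∀ j ∈ Ring.jacobson A, e (src a) * j ∈ K ∙ X a := fun _ =>
    idempotent_mul_mem_span_singleton horth harr hJ hradgen
      (fun _ => eq_of_src_eq_of_arrow_mul_eq_zero horth harr hdec hrad hadm hJ hfsym hfL ha)
      (mul_mem_span_singleton_of_mul_eq horth hdec (harr a).2 ha)
  have hcorner (w : V) (hw : w ≠ src a) (y : A) : e (src a) * y * e w = 0 :=
    idempotent_mul_mul_idempotent_eq_zero horth hdec hw.symm hvJ
      (by rw [← (harr a).2, mul_assoc, horth, if_neg (hloop ▸ hw.symm), mul_zero]) y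
  have hone : e (src a) = 1 := (hind _ (idempotent_mem_center hsum fun w hw y =>
    ⟨hcorner w hw y, mul_mul_eq_zero_of_symm hfsym hfL (hcorner w hw) y⟩) (hidem _)).resolve_left
      (hne _)
  refine hnot (nonempty_algEquiv_quotient_span_X_sq (arrow_ne_zero hadm a) (ha _ (hrad a))
    fun y => ?_)
  obtain ⟨c, j, hj, rfl⟩ := hdec y
  obtain ⟨β, hβ⟩ := Submodule.mem_span_singleton.1 (hvJ j hj)
  refine ⟨c (src a), β, ?_⟩
  rw [hβ, ← mul_one (∑ w, c w • e w), ← hone, sum_smul_mul_of_mul_eq horth c (hidem _), hone,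
    one_mul]

end PresentationOverField

theorem stmt17_general (K A : Type*) [Field K] [Ring A] [Algebra K A] [FiniteDimensional K A]
    (V E : Type*) [Fintype V] [Fintype E] [DecidableEq V]
    (src tgt : E → V) (e : V → A) (X : E → A)
    -- complete set of orthogonal nonzero idempotents
    (horth : ∀ v w, e v * e w = if v = w then e v else 0)
    (hne : ∀ v, e v ≠ 0)
    (hsum : (∑ v, e v) = 1)
    -- arrows
    (harr : ∀ a, e (src a) * X a = X a ∧ X a * e (tgt a) = X a)
    -- A is generated by the vertices and arrows (A = KQ/I)
    (hgen : Algebra.adjoin K (Set.range e ∪ Set.range X) = ⊤)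
    -- admissibility of I: the arrows lie in the radical, are linearly independent modulo the
    -- square of the radical, and generate the radical together with its square
    (hrad : ∀ a, X a ∈ Ideal.jacobson (⊥ : Ideal A))
    (hadm : ∀ c : E → K,
      (∑ a, c a • X a) ∈ Submodule.span K {z : A | ∃ x ∈ Ideal.jacobson (⊥ : Ideal A),
        ∃ y ∈ Ideal.jacobson (⊥ : Ideal A), z = x * y} → c = 0)
    (hradgen : Submodule.span K (Set.range X) ⊔
        Submodule.span K {z : A | ∃ x ∈ Ideal.jacobson (⊥ : Ideal A),
          ∃ y ∈ Ideal.jacobson (⊥ : Ideal A), z = x * y} =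
      Submodule.restrictScalars K (Ideal.jacobson (⊥ : Ideal A)))
    -- special biserial
    (huniqR : ∀ a b c : E, X a * X b ≠ 0 → X a * X c ≠ 0 → b = c)
    (huniqL : ∀ a b c : E, X b * X a ≠ 0 → X c * X a ≠ 0 → b = c)
    -- A is symmetric
    (f : A →ₗ[K] K) (hfsym : ∀ x y : A, f (x * y) = f (y * x))
    (hfL : ∀ x : A, (∀ y, f (y * x) = 0) → x = 0)
    -- A is indecomposable (no nontrivial central idempotents)
    (hind : ∀ z : A, z ∈ Set.center A → z * z = z → z = 0 ∨ z = 1)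
    -- A is not isomorphic to K[X]/(X²)
    (hnot : ¬ Nonempty (A ≃ₐ[K]
      (Polynomial K ⧸ Ideal.span {(Polynomial.X : Polynomial K) ^ 2}))) :
    ∀ a : E, (∃! a' : E, X a' * X a ≠ 0) ∧ (∃! a'' : E, X a * X a'' ≠ 0) := by
  simp only [Ideal.jacobson_bot] at hrad hadm hradgen
  have : IsArtinianRing A := .of_finite K A
  have hJ : IsNilpotent (Ring.jacobson A) := IsSemiprimaryRing.isNilpotent
  have hXJ := exists_arrow_mul_ne_zero horth hne hsum harr
    (exists_eq_sum_smul_add_mem_jacobson horth hsum hgen hrad) hrad hadm hradgen hJ hfsym hfL hind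
    hnot
  intro a
  obtain ⟨j, hj, hXaj⟩ := hXJ a
  refine ⟨?_, ?_⟩
  · obtain ⟨a', ha'⟩ : ∃ a', X a' * X a ≠ 0 := by
      by_contra! h
      exact hXaj <| (forall_mul_eq_zero_iff_of_symm hfsym hfL _ _).2
        (mul_arrow_eq_zero_of_forall hJ hradgen h) j hj
    exact ⟨a', ha', fun b hb => huniqL a b a' hb ha'⟩
  · obtain ⟨a'', ha''⟩ : ∃ a'', X a * X a'' ≠ 0 := by
      by_contra! h
      exact hXaj (arrow_mul_eq_zero_of_forall hJ hradgen h j hj)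
    exact ⟨a'', ha'', fun b hb => huniqR a b a'' hb ha''⟩

/-- Let `A = KQ/I` be an indecomposable finite-dimensional symmetric special biserial
`K`-algebra, not isomorphic to `K[X]/(X²)`. The presentation is encoded by a complete family of
orthogonal nonzero idempotents `e v` (one for each vertex) and arrow elements `X a` with
`e (src a) * X a * e (tgt a) = X a`, generating `A`, the arrows lying in the Jacobson radical,
linearly independent modulo its square and generating it together with its square
(admissibility of `I`). Special biserial: at most two arrows start and end at each vertex, and
each arrow composes nontrivially with at most one arrow on each side. Then for every arrow `a`
there is a unique arrow `a'` with `X a' * X a ≠ 0` and a unique arrow `a''` with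
`X a * X a'' ≠ 0`. -/
theorem stmt17 (K A : Type*) [Field K] [Ring A] [Algebra K A] [FiniteDimensional K A]
    (V E : Type*) [Fintype V] [Fintype E] [DecidableEq V] [DecidableEq E]
    (src tgt : E → V) (e : V → A) (X : E → A)
    -- complete set of orthogonal nonzero idempotents
    (horth : ∀ v w, e v * e w = if v = w then e v else 0)
    (hne : ∀ v, e v ≠ 0)
    (hsum : (∑ v, e v) = 1)
    -- arrows
    (harr : ∀ a, e (src a) * X a = X a ∧ X a * e (tgt a) = X a)
    -- A is generated by the vertices and arrows (A = KQ/I)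
    (hgen : Algebra.adjoin K (Set.range e ∪ Set.range X) = ⊤)
    -- admissibility of I: the arrows lie in the radical, are linearly independent modulo the
    -- square of the radical, and generate the radical together with its square
    (hrad : ∀ a, X a ∈ Ideal.jacobson (⊥ : Ideal A))
    (hadm : ∀ c : E → K,
      (∑ a, c a • X a) ∈ Submodule.span K {z : A | ∃ x ∈ Ideal.jacobson (⊥ : Ideal A),
        ∃ y ∈ Ideal.jacobson (⊥ : Ideal A), z = x * y} → c = 0)
    (hradgen : Submodule.span K (Set.range X) ⊔
        Submodule.span K {z : A | ∃ x ∈ Ideal.jacobson (⊥ : Ideal A),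
          ∃ y ∈ Ideal.jacobson (⊥ : Ideal A), z = x * y} =
      Submodule.restrictScalars K (Ideal.jacobson (⊥ : Ideal A)))
    -- special biserial
    (hout : ∀ v, (Finset.univ.filter fun a => src a = v).card ≤ 2)
    (hin : ∀ v, (Finset.univ.filter fun a => tgt a = v).card ≤ 2)
    (huniqR : ∀ a b c : E, X a * X b ≠ 0 → X a * X c ≠ 0 → b = c)
    (huniqL : ∀ a b c : E, X b * X a ≠ 0 → X c * X a ≠ 0 → b = c)
    -- A is symmetric
    (f : A →ₗ[K] K) (hfsym : ∀ x y : A, f (x * y) = f (y * x))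
    (hfL : ∀ x : A, (∀ y, f (y * x) = 0) → x = 0)
    (hfR : ∀ x : A, (∀ y, f (x * y) = 0) → x = 0)
    -- A is indecomposable (no nontrivial central idempotents)
    (hind : ∀ z : A, z ∈ Set.center A → z * z = z → z = 0 ∨ z = 1)
    -- A is not isomorphic to K[X]/(X²)
    (hnot : ¬ Nonempty (A ≃ₐ[K]
      (Polynomial K ⧸ Ideal.span {(Polynomial.X : Polynomial K) ^ 2}))) :
    ∀ a : E, (∃! a' : E, X a' * X a ≠ 0) ∧ (∃! a'' : E, X a * X a'' ≠ 0) :=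
  stmt17_general K A V E src tgt e X horth hne hsum harr hgen hrad hadm hradgen huniqR huniqL f
    hfsym hfL hind hnot
end

section
/- Let r ≥ 1, u ≥ 1 with r·u odd (so r odd and u odd). Then the group ℤ^{u+1} / C·ℤ^{u+1}, where C is the integer matrix with (1,1)-entry 4r, remaining border entries 2r, and lower-right block I_u + r·J_u, is isomorphic to ℤ/2 × ℤ/2r. -/
namespace cartanGam

open Matrix

variable {u r : ℕ}

lemma mulVec_apply_zero (v : Fin (u + 1) → ℤ) :
    (cartanGam u r *ᵥ v) 0 = 2 * r * (2 * v 0 + ∑ j : Fin u, v j.succ) := by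
  simp only [mulVec, dotProduct, cartanGam, of_apply, Fin.sum_univ_succ, Fin.val_zero,
    Fin.val_succ, if_true, Nat.succ_ne_zero, if_false]
  rw [mul_add, Finset.mul_sum]
  ring

lemma mulVec_apply_succ (v : Fin (u + 1) → ℤ) (i : Fin u) :
    (cartanGam u r *ᵥ v) i.succ = 2 * r * v 0 + v i.succ + r * ∑ j : Fin u, v j.succ := by
  simp only [mulVec, dotProduct, cartanGam, of_apply, Fin.sum_univ_succ, Fin.val_zero,
    Fin.val_succ, if_true, Nat.succ_ne_zero, if_false, Fin.succ_inj, add_mul, ite_mul, one_mul,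
    zero_mul, Finset.sum_add_distrib, Finset.sum_ite_eq, Finset.mem_univ, Finset.mul_sum]
  ring

lemma single_succ_sub_single_succ_mem_range (i j : Fin u) :
    Pi.single i.succ 1 - Pi.single j.succ 1 ∈ LinearMap.range (cartanGam u r).mulVecLin := by
  refine ⟨Pi.single i.succ 1 - Pi.single j.succ 1, funext fun k => ?_⟩
  cases k using Fin.cases <;>
    simp [mulVec_apply_zero, mulVec_apply_succ, Pi.single_apply, Finset.sum_sub_distrib]

lemma single_succ_two_mem_range (j : Fin u) :
    Pi.single j.succ 2 ∈ LinearMap.range (cartanGam u r).mulVecLin := by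
  refine ⟨Pi.single j.succ 2 - Pi.single 0 1, funext fun k => ?_⟩
  cases k using Fin.cases
  · simp [mulVec_apply_zero, Pi.single_apply]
  · simp [mulVec_apply_succ, Pi.single_apply]
    ring

lemma single_zero_mem_range (hodd : Odd (r * u)) :
    Pi.single 0 (2 * r) ∈ LinearMap.range (cartanGam u r).mulVecLin := by
  obtain ⟨c, hc⟩ := hodd
  have hc' : (r * u : ℤ) = 2 * c + 1 := by exact_mod_cast hc
  -- `2(c + 1) = ru + 1` is exactly what makes the first entry `2r` and the others vanish
  refine ⟨Fin.cons ((c : ℤ) + 1) fun _ => -(r : ℤ), funext fun k => ?_⟩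
  cases k using Fin.cases
  · simp [mulVec_apply_zero]
    linear_combination (-2 * r : ℤ) * hc'
  · simp [mulVec_apply_succ]
    linear_combination (-r : ℤ) * hc'

def cokerHom (u r : ℕ) : (Fin (u + 1) → ℤ) →+ ZMod 2 × ZMod (2 * r) where
  toFun x := ((∑ j : Fin u, x j.succ : ℤ), (x 0 : ZMod (2 * r)))
  map_zero' := by simp
  map_add' x y := by simp [Finset.sum_add_distrib]

lemma mem_ker_cokerHom_iff (x : Fin (u + 1) → ℤ) :
    x ∈ (cokerHom u r).ker ↔ (2 : ℤ) ∣ ∑ j : Fin u, x j.succ ∧ (2 * r : ℤ) ∣ x 0 := by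
  simp only [AddMonoidHom.mem_ker, cokerHom, AddMonoidHom.coe_mk, ZeroHom.coe_mk,
    Prod.mk_eq_zero, ZMod.intCast_zmod_eq_zero_iff_dvd]
  push_cast
  rfl

lemma cokerHom_surjective (hu : 1 ≤ u) : Function.Surjective (cokerHom u r) := by
  rintro ⟨p, q⟩
  obtain ⟨c, rfl⟩ := ZMod.intCast_surjective p
  obtain ⟨d, rfl⟩ := ZMod.intCast_surjective q
  exact ⟨Fin.cons d (Pi.single ⟨0, hu⟩ c), by simp [cokerHom, Pi.single_apply]⟩

lemma range_le_ker_cokerHom (hodd : Odd (r * u)) :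
    (LinearMap.range (cartanGam u r).mulVecLin).toAddSubgroup ≤ (cokerHom u r).ker := by
  rintro _ ⟨v, rfl⟩
  obtain ⟨c, hc⟩ := hodd
  have hc' : (r * u : ℤ) = 2 * c + 1 := by exact_mod_cast hc
  rw [mulVecLin_apply, mem_ker_cokerHom_iff, mulVec_apply_zero]
  simp only [mulVec_apply_succ, Finset.sum_add_distrib, Finset.sum_const, Finset.card_univ,
    Fintype.card_fin, nsmul_eq_mul]
  refine ⟨⟨r * u * v 0 + (c + 1) * ∑ j : Fin u, v j.succ, ?_⟩, dvd_mul_right _ _⟩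
  linear_combination (∑ j : Fin u, v j.succ) * hc'

lemma ker_cokerHom_le_range (hu : 1 ≤ u) (hodd : Odd (r * u)) :
    (cokerHom u r).ker ≤ (LinearMap.range (cartanGam u r).mulVecLin).toAddSubgroup := by
  intro x hx
  obtain ⟨⟨b, hb⟩, ⟨a, ha⟩⟩ := (mem_ker_cokerHom_iff x).1 hx
  set j₀ : Fin u := ⟨0, hu⟩
  have hdecomp : x = a • Pi.single 0 (2 * r : ℤ) + b • Pi.single j₀.succ 2
      + ∑ j : Fin u, x j.succ • (Pi.single j.succ 1 - Pi.single j₀.succ 1) := by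
    funext k
    cases k using Fin.cases
    · simp [ha, mul_comm]
    · simp [Pi.single_apply, mul_sub, Finset.sum_sub_distrib, hb]
      split_ifs <;> ring
  rw [hdecomp]
  refine add_mem (add_mem ?_ ?_) (sum_mem fun j _ => ?_)
  · exact Submodule.smul_mem _ a (single_zero_mem_range hodd)
  · exact Submodule.smul_mem _ b (single_succ_two_mem_range j₀)
  · exact Submodule.smul_mem _ _ (single_succ_sub_single_succ_mem_range j j₀)

end cartanGam

theorem stmt18_general (u r : ℕ) (hu : 1 ≤ u) (hodd : Odd (r * u)) :
    Nonempty (((Fin (u + 1) → ℤ) ⧸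
        (LinearMap.range (Matrix.mulVecLin (cartanGam u r))).toAddSubgroup) ≃+
      (ZMod 2 × ZMod (2 * r))) := by
  have hrange : (LinearMap.range (Matrix.mulVecLin (cartanGam u r))).toAddSubgroup =
      (cartanGam.cokerHom u r).ker :=
    le_antisymm (cartanGam.range_le_ker_cokerHom hodd) (cartanGam.ker_cokerHom_le_range hu hodd)
  exact ⟨(QuotientAddGroup.quotientAddEquivOfEq hrange).trans
    (QuotientAddGroup.quotientKerEquivOfSurjective _ (cartanGam.cokerHom_surjective hu))⟩

/-- For `r·u` odd, the cokernel `ℤ^{u+1}/C·ℤ^{u+1}` of the Cartan matrix `C` of `Γ(p,q;r)`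
is isomorphic to `ℤ/2 × ℤ/2r`. -/
theorem stmt18 (u r : ℕ) (hr : 1 ≤ r) (hu : 1 ≤ u) (hodd : Odd (r * u)) :
    Nonempty (((Fin (u + 1) → ℤ) ⧸
        (LinearMap.range (Matrix.mulVecLin (cartanGam u r))).toAddSubgroup) ≃+
      (ZMod 2 × ZMod (2 * r))) :=
  stmt18_general u r hu hodd
end
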